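/- arXiv:1110.3211 — 5 statements merged into one kernel-verified Lean document; each statement's English description precedes it below -/
import Mathlib

section
/- Let T be a tree with at least 2 vertices, and consider the Tron game on T where Alice first picks a start vertex, then Bob picks a different start vertex, and players alternately move to adjacent unvisited vertices (Alice moving first), each claiming the vertices they traverse (including their start vertex); the game ends when both players are stuck. Then under optimal play, the number of vertices Alice claims is at most one more than the number of vertices Bob claims. -/
/-!
Let Alice start at `v` and let `p` be a longest path from `v`. Bob starts at the second vertex
`w` of `p` and walks along `p`, collecting as many vertices as `p` has edges. In a forest the edge
`vw` is a bridge, and Alice can never cross it since both its ends are occupied; so she stays on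
`v`'s side, never meets Bob's path, and her trail is a path from `v`: it has at most one vertex
more than `p` has edges. While Bob is still on `p`, alternation keeps Alice at most one vertex
ahead. If `v` is isolated, Alice scores `1` and Bob may start anywhere.
-/

/-- A state of the Tron game: positions of the two players, the set of
vertices visited so far by either player, and the two scores. -/
structure TronState (V : Type) where
  posA : V
  posB : V
  visited : Finset V
  scoreA : ℕ
  scoreB : ℕ

/-- A player at `p` is stuck if every vertex it could move to is visited. -/
def TronStuck {V : Type} (R : V → V → Prop) (p : V) (vis : Finset V) : Prop :=
  ∀ w, R p w → w ∈ vis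

open Classical in
/-- Bob (second player) can force predicate `P` of the two final scores
(Alice's, Bob's), playing on the (possibly directed) edge relation `R`;
`turn = true` means Alice moves next.  A stuck player passes; the game ends
when both players are stuck. -/
def tronForceB {V : Type} [DecidableEq V] (R : V → V → Prop) (P : ℕ → ℕ → Prop) :
    ℕ → Bool → TronState V → Prop
  | 0, _, s => P s.scoreA s.scoreB
  | f + 1, true, s =>
      if TronStuck R s.posA s.visited then
        if TronStuck R s.posB s.visited then P s.scoreA s.scoreB
        else tronForceB R P f false s
      else
        ∀ w, R s.posA w → w ∉ s.visited →
          tronForceB R P f false ⟨w, s.posB, insert w s.visited, s.scoreA + 1, s.scoreB⟩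
  | f + 1, false, s =>
      if TronStuck R s.posB s.visited then
        if TronStuck R s.posA s.visited then P s.scoreA s.scoreB
        else tronForceB R P f true s
      else
        ∃ w, R s.posB w ∧ w ∉ s.visited ∧
          tronForceB R P f true ⟨s.posA, w, insert w s.visited, s.scoreA, s.scoreB + 1⟩

open Classical in
/-- Alice (first player) can force predicate `P` of the final scores. -/
def tronForceA {V : Type} [DecidableEq V] (R : V → V → Prop) (P : ℕ → ℕ → Prop) :
    ℕ → Bool → TronState V → Prop
  | 0, _, s => P s.scoreA s.scoreB
  | f + 1, true, s =>
      if TronStuck R s.posA s.visited then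
        if TronStuck R s.posB s.visited then P s.scoreA s.scoreB
        else tronForceA R P f false s
      else
        ∃ w, R s.posA w ∧ w ∉ s.visited ∧
          tronForceA R P f false ⟨w, s.posB, insert w s.visited, s.scoreA + 1, s.scoreB⟩
  | f + 1, false, s =>
      if TronStuck R s.posB s.visited then
        if TronStuck R s.posA s.visited then P s.scoreA s.scoreB
        else tronForceA R P f true s
      else
        ∀ w, R s.posB w → w ∉ s.visited →
          tronForceA R P f true ⟨s.posA, w, insert w s.visited, s.scoreA, s.scoreB + 1⟩

open Classical in
/-- Every complete play of the game satisfies `P` of the final scores. -/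
def tronInevitable {V : Type} [DecidableEq V] (R : V → V → Prop) (P : ℕ → ℕ → Prop) :
    ℕ → Bool → TronState V → Prop
  | 0, _, s => P s.scoreA s.scoreB
  | f + 1, true, s =>
      if TronStuck R s.posA s.visited then
        if TronStuck R s.posB s.visited then P s.scoreA s.scoreB
        else tronInevitable R P f false s
      else
        ∀ w, R s.posA w → w ∉ s.visited →
          tronInevitable R P f false ⟨w, s.posB, insert w s.visited, s.scoreA + 1, s.scoreB⟩
  | f + 1, false, s =>
      if TronStuck R s.posB s.visited then
        if TronStuck R s.posA s.visited then P s.scoreA s.scoreB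
        else tronInevitable R P f true s
      else
        ∀ w, R s.posB w → w ∉ s.visited →
          tronInevitable R P f true ⟨s.posA, w, insert w s.visited, s.scoreA, s.scoreB + 1⟩

/-- The initial state once Alice has started at `v` and Bob at `w`:
both vertices are visited, both scores are `1`, and Alice moves first. -/
def tronInit {V : Type} [DecidableEq V] (v w : V) : TronState V :=
  ⟨v, w, {v, w}, 1, 1⟩

/-- Enough fuel for any Tron game on `V` to finish. -/
def tronFuel (V : Type) [Fintype V] : ℕ := 2 * Fintype.card V + 2

/-- In the Tron game on `G` (Alice picks a start vertex, then Bob picks a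
different one, then they alternate, Alice first), Bob can force `P`. -/
def bobCanForce {V : Type} [Fintype V] [DecidableEq V] (G : SimpleGraph V)
    (P : ℕ → ℕ → Prop) : Prop :=
  ∀ v : V, ∃ w, w ≠ v ∧ tronForceB G.Adj P (tronFuel V) true (tronInit v w)

/-- In the Tron game on `G`, Alice can force `P`. -/
def aliceCanForce {V : Type} [Fintype V] [DecidableEq V] (G : SimpleGraph V)
    (P : ℕ → ℕ → Prop) : Prop :=
  ∃ v : V, ∀ w, w ≠ v → tronForceA G.Adj P (tronFuel V) true (tronInit v w)

namespace TronState

variable {V : Type} [DecidableEq V]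

@[simps]
def moveA (s : TronState V) (w : V) : TronState V :=
  ⟨w, s.posB, insert w s.visited, s.scoreA + 1, s.scoreB⟩

@[simps]
def moveB (s : TronState V) (w : V) : TronState V :=
  ⟨s.posA, w, insert w s.visited, s.scoreA, s.scoreB + 1⟩

end TronState

/-- Since the invariant yields `P` in every state, the amount of fuel plays no role. -/
theorem tronForceB_of_invariant {V : Type} [DecidableEq V] {R : V → V → Prop}
    {P : ℕ → ℕ → Prop} (I : Bool → TronState V → Prop)
    (hP : ∀ b s, I b s → P s.scoreA s.scoreB)
    (hmoveA : ∀ s, I true s → ∀ w, R s.posA w → w ∉ s.visited → I false (s.moveA w))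
    (hpassA : ∀ s, I true s → TronStuck R s.posA s.visited → I false s)
    (hmoveB : ∀ s, I false s → ¬TronStuck R s.posB s.visited →
      ∃ w, R s.posB w ∧ w ∉ s.visited ∧ I true (s.moveB w))
    (hpassB : ∀ s, I false s → TronStuck R s.posB s.visited → I true s) :
    ∀ f b s, I b s → tronForceB R P f b s := by
  intro f
  induction f with
  | zero => intro b s hs; rw [tronForceB]; exact hP b s hs
  | succ f ih =>
    rintro (_ | _) s hs <;> rw [tronForceB]
    · split_ifs with hB
      · exact hP false s hs
      · exact ih true s (hpassB s hs hB)
      · obtain ⟨w, hw, hwv, hI⟩ := hmoveB s hs hB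
        exact ⟨w, hw, hwv, ih true _ hI⟩
    · split_ifs with hA
      · exact hP true s hs
      · exact ih false s (hpassA s hs hA)
      · exact fun w hw hwv => ih false _ (hmoveA s hs w hw hwv)

namespace SimpleGraph

variable {V : Type}

theorem exists_isPath_forall_length_le [Fintype V] (G : SimpleGraph V) (v : V) :
    ∃ (x : V) (p : G.Walk v x), p.IsPath ∧
      ∀ (y : V) (q : G.Walk v y), q.IsPath → q.length ≤ p.length := by
  let lengths : Set ℕ := {n | ∃ (y : V) (q : G.Walk v y), q.IsPath ∧ q.length = n}
  have hne : lengths.Nonempty := ⟨0, v, .nil, .nil, rfl⟩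
  have hbdd : BddAbove lengths :=
    ⟨Fintype.card V, by rintro _ ⟨y, q, hq, rfl⟩; exact hq.length_lt.le⟩
  obtain ⟨x, p, hp, hlen⟩ := Nat.sSup_mem hne hbdd
  exact ⟨x, p, hp, fun y q hq => hlen ▸ le_csSup hbdd ⟨y, q, hq, rfl⟩⟩

theorem IsAcyclic.not_reachable_deleteEdges_of_mem_support {T : SimpleGraph V} (hT : T.IsAcyclic)
    {v w x y : V} {e : T.Adj v w} {q : T.Walk w x} (hp : (Walk.cons e q).IsPath)
    (hy : y ∈ q.support) : ¬(T.deleteEdges {s(v, w)}).Reachable v y := by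
  classical
  intro hvy
  have hv : v ∉ q.support := (Walk.cons_isPath_iff e q).1 hp |>.2
  have hwy : (T.deleteEdges {s(v, w)}).Reachable w y :=
    reachable_deleteEdges_iff_exists_walk.2 ⟨q.takeUntil y hy, fun he => hv <|
      q.support_takeUntil_subset_support hy ((q.takeUntil y hy).fst_mem_support_of_mem_edges he)⟩
  exact isBridge_iff.1 (isAcyclic_iff_forall_adj_isBridge.1 hT e) (hvy.trans hwy.symm)

end SimpleGraph

section BobRoute

open SimpleGraph

variable {V : Type} {T : SimpleGraph V} {v w : V} {h : ℕ} {s : TronState V}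

/-- Bob's strategy after Alice starts at `v` and Bob at `w`: Bob walks along the path `q`, which
lies beyond the edge `vw` and brings his score to `h`, while Alice's trail avoids that edge.
Until Bob's score reaches `h`, Alice leads by at most one point, and only right after her move. -/
structure BobRouteInvariant (T : SimpleGraph V) (v w : V) (h : ℕ) (aliceTurn : Bool)
    (s : TronState V) : Prop where
  start_mem : v ∈ s.visited
  bob_start_mem : w ∈ s.visited
  alice_trail : ∃ p : (T.deleteEdges {s(v, w)}).Walk v s.posA,
    p.IsPath ∧ (∀ x ∈ p.support, x ∈ s.visited) ∧ s.scoreA = p.length + 1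
  bob_route : ∃ (x : V) (q : T.Walk s.posB x), q.IsPath ∧
    (∀ y ∈ q.support.tail, y ∉ s.visited ∧ ¬(T.deleteEdges {s(v, w)}).Reachable v y) ∧
    h ≤ s.scoreB + q.length
  score : s.scoreA + aliceTurn.toNat ≤ s.scoreB + 1 ∨ h ≤ s.scoreB

namespace BobRouteInvariant

theorem init [DecidableEq V] {x : V} (q : T.Walk w x) (hq : q.IsPath)
    (hsep : ∀ y ∈ q.support.tail, ¬(T.deleteEdges {s(v, w)}).Reachable v y)
    (hh : h ≤ q.length + 1) : BobRouteInvariant T v w h true (tronInit v w) where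
  start_mem := by simp [tronInit]
  bob_start_mem := by simp [tronInit]
  alice_trail := ⟨.nil, .nil, by simp [tronInit], rfl⟩
  bob_route := by
    refine ⟨x, q, hq, fun y hy => ⟨?_, hsep y hy⟩, by simpa [tronInit, add_comm] using hh⟩
    have hyw : y ≠ w := by
      rintro rfl
      exact (List.nodup_cons.1 (q.cons_tail_support ▸ hq.support_nodup)).1 hy
    have hyv : y ≠ v := by
      rintro rfl
      exact hsep y hy .rfl
    simp [tronInit, hyw, hyv]
  score := by simp [tronInit]

theorem scoreA_le (hh : ∀ (y : V) (p : T.Walk v y), p.IsPath → p.length ≤ h)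
    {b : Bool} (hs : BobRouteInvariant T v w h b s) : s.scoreA ≤ h + 1 := by
  obtain ⟨p, hp, -, hscore⟩ := hs.alice_trail
  have := hh _ (p.mapLe (deleteEdges_le _)) (hp.mapLe _)
  rw [Walk.length_mapLe] at this
  omega

theorem passA (hs : BobRouteInvariant T v w h true s) : BobRouteInvariant T v w h false s :=
  { hs with
    score := hs.score.imp_left fun hA => by
      simp only [Bool.toNat_true, Bool.toNat_false] at hA ⊢
      omega }

theorem moveA [DecidableEq V] {u : V} (hs : BobRouteInvariant T v w h true s)
    (hu : T.Adj s.posA u) (huv : u ∉ s.visited) :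
    BobRouteInvariant T v w h false (s.moveA u) := by
  obtain ⟨p, hp, hpvis, hscoreA⟩ := hs.alice_trail
  obtain ⟨x, q, hq, hroute, hlen⟩ := hs.bob_route
  have hu' : (T.deleteEdges {s(v, w)}).Adj s.posA u := by
    refine deleteEdges_adj.2 ⟨hu, fun he => ?_⟩
    rcases Sym2.eq_iff.1 (Set.mem_singleton_iff.1 he) with ⟨-, rfl⟩ | ⟨-, rfl⟩
    exacts [huv hs.bob_start_mem, huv hs.start_mem]
  have hpath : (p.concat hu').IsPath := hp.concat (fun h => huv (hpvis _ h)) hu'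
  have hpath_vis : ∀ y ∈ (p.concat hu').support, y ∈ insert u s.visited := by
    intro y hy
    rw [Walk.support_concat, List.mem_append, List.mem_singleton] at hy
    rcases hy with hy | rfl
    · exact Finset.mem_insert_of_mem (hpvis y hy)
    · exact Finset.mem_insert_self y _
  -- Alice is on `v`'s side of the deleted edge, Bob's route on the other side
  have hroute' : ∀ y ∈ q.support.tail, y ∉ insert u s.visited := by
    intro y hy hyu
    rcases Finset.mem_insert.1 hyu with rfl | hyv
    · exact (hroute y hy).2 (p.concat hu').reachable
    · exact (hroute y hy).1 hyv
  refine ⟨Finset.mem_insert_of_mem hs.start_mem, Finset.mem_insert_of_mem hs.bob_start_mem,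
    ⟨p.concat hu', hpath, hpath_vis, ?_⟩,
    ⟨x, q, hq, fun y hy => ⟨hroute' y hy, (hroute y hy).2⟩, hlen⟩, ?_⟩
  · show s.scoreA + 1 = (p.concat hu').length + 1
    rw [Walk.length_concat, hscoreA]
  · have := hs.score
    simp only [Bool.toNat_true, Bool.toNat_false, TronState.moveA_scoreA,
      TronState.moveA_scoreB] at *
    omega

theorem passB (hs : BobRouteInvariant T v w h false s) (hB : TronStuck T.Adj s.posB s.visited) :
    BobRouteInvariant T v w h true s := by
  obtain ⟨x, q, hq, hroute, hlen⟩ := hs.bob_route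
  cases q with
  | nil => exact { hs with score := Or.inr (by simpa using hlen) }
  | cons e q => exact absurd (hB _ e) (hroute _ (by simp)).1

theorem moveB_of_route [DecidableEq V] {u x : V} (hs : BobRouteInvariant T v w h false s)
    (q : T.Walk u x) (hq : q.IsPath)
    (hroute : ∀ y ∈ q.support.tail,
      y ∉ insert u s.visited ∧ ¬(T.deleteEdges {s(v, w)}).Reachable v y)
    (hlen : h ≤ s.scoreB + 1 + q.length) : BobRouteInvariant T v w h true (s.moveB u) := by
  obtain ⟨p, hp, hpvis, hscoreA⟩ := hs.alice_trail
  refine ⟨Finset.mem_insert_of_mem hs.start_mem, Finset.mem_insert_of_mem hs.bob_start_mem,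
    ⟨p, hp, fun y hy => Finset.mem_insert_of_mem (hpvis y hy), hscoreA⟩,
    ⟨x, q, hq, hroute, hlen⟩, ?_⟩
  have := hs.score
  simp only [Bool.toNat_true, Bool.toNat_false, TronState.moveB_scoreA,
    TronState.moveB_scoreB] at *
  omega

theorem moveB [DecidableEq V] (hs : BobRouteInvariant T v w h false s)
    (hB : ¬TronStuck T.Adj s.posB s.visited) :
    ∃ u, T.Adj s.posB u ∧ u ∉ s.visited ∧ BobRouteInvariant T v w h true (s.moveB u) := by
  obtain ⟨x, q, hq, hroute, hlen⟩ := hs.bob_route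
  cases q with
  | nil =>
    obtain ⟨u, hu, huv⟩ : ∃ u, T.Adj s.posB u ∧ u ∉ s.visited := by
      simpa [TronStuck] using hB
    refine ⟨u, hu, huv, hs.moveB_of_route .nil .nil (by simp) ?_⟩
    simp only [Walk.length_nil] at hlen ⊢
    omega
  | @cons _ u _ e q =>
    have hu : u ∉ q.support.tail :=
      (List.nodup_cons.1 (q.cons_tail_support ▸ hq.of_cons.support_nodup)).1
    refine ⟨u, e, (hroute u (by simp)).1, hs.moveB_of_route q hq.of_cons (fun y hy => ?_) ?_⟩
    · have hy' : y ∈ (Walk.cons e q).support.tail := by simp [List.mem_of_mem_tail hy]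
      have hyu : y ≠ u := by rintro rfl; exact hu hy
      exact ⟨by simp [(hroute y hy').1, hyu], (hroute y hy').2⟩
    · rw [Walk.length_cons] at hlen
      omega

end BobRouteInvariant

theorem tronForceB_of_bobRouteInvariant [DecidableEq V]
    (hh : ∀ (y : V) (p : T.Walk v y), p.IsPath → p.length ≤ h)
    {b : Bool} (hs : BobRouteInvariant T v w h b s) (f : ℕ) :
    tronForceB T.Adj (fun a b => a ≤ b + 1) f b s := by
  refine tronForceB_of_invariant (BobRouteInvariant T v w h) (fun b s hs => ?_)
    (fun _ hs _ => hs.moveA) (fun _ hs _ => hs.passA) (fun _ hs => hs.moveB)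
    (fun _ hs => hs.passB) f b s hs
  have := hs.score
  have := hs.scoreA_le hh
  omega

end BobRoute

theorem tron_tree_alice_at_most_bob_add_one_general
    {V : Type} [Fintype V] [DecidableEq V] (T : SimpleGraph V)
    (hacyc : T.IsAcyclic) (hcard : 2 ≤ Fintype.card V) :
    bobCanForce T (fun a b => a ≤ b + 1) := by
  intro v
  obtain ⟨x, p, hp, hlongest⟩ := T.exists_isPath_forall_length_le v
  cases p with
  | nil =>
    obtain ⟨w, hw⟩ := Fintype.exists_ne_of_one_lt_card hcard v
    exact ⟨w, hw, tronForceB_of_bobRouteInvariant hlongest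
      (BobRouteInvariant.init .nil .nil (by simp) (by simp)) _⟩
  | cons e q =>
    have hsep := fun y (hy : y ∈ q.support.tail) =>
      hacyc.not_reachable_deleteEdges_of_mem_support hp (List.mem_of_mem_tail hy)
    exact ⟨_, e.ne', tronForceB_of_bobRouteInvariant hlongest
      (BobRouteInvariant.init q hp.of_cons hsep le_rfl) _⟩

/-- On a tree with at least two vertices, under optimal play
Alice's score is at most one more than Bob's score: Bob can force this. -/
theorem tron_tree_alice_at_most_bob_add_one
    {V : Type} [Fintype V] [DecidableEq V] (T : SimpleGraph V)
    (hconn : T.Connected) (hacyc : T.IsAcyclic) (hcard : 2 ≤ Fintype.card V) :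
    bobCanForce T (fun a b => a ≤ b + 1) :=
  tron_tree_alice_at_most_bob_add_one_general T hacyc hcard
end

section
/- Let G be a graph consisting of two disjoint paths, each with n vertices. In the Tron game on G, as n tends to infinity, the optimal ratio (Bob's score)/(Alice's score) tends to 2/(sqrt(5) - 1), the golden ratio. -/
/-- The disjoint union of two paths, each with `n` vertices. -/
def twoPaths (n : ℕ) : SimpleGraph (Fin n ⊕ Fin n) :=
  SimpleGraph.fromRel (fun x y =>
    match x, y with
    | Sum.inl a, Sum.inl b => a.val + 1 = b.val
    | Sum.inr a, Sum.inr b => a.val + 1 = b.val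
    | _, _ => False)

/-!
Once a player runs along a path away from the other, the play is forced: the runner gets the rest
of that path and the other player at most the part of the graph he is shut into. Against Alice's
start `p a` with `a ≤ n - 1 - a`, Bob starts either at the end of the other path, scoring `n`
against at most `n - a`, or next to her on her longer side, scoring `n - 1 - a` against `a + 1`;
for `r < φ` and large `n` one of the two ratios is at least `r`. Alice starts at
`x = ⌊(2 - φ) n⌋` and runs away from Bob: she scores `n - x ≥ n / φ` against at most `n`, or
`x + 1` against at most `n - 1 - x`, and both ratios are at most `φ` because `φ² = φ + 1`.
-/

open Finset

theorem card_sdiff_lt_card {α : Type} [DecidableEq α] {T S : Finset α} {u : α} (huT : u ∈ T)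
    (huS : u ∈ S) : #(T \ S) < #T :=
  card_lt_card (sdiff_lt_left.2 (not_disjoint_iff.2 ⟨u, huS, huT⟩))

section Game

variable {V : Type} [DecidableEq V] {R : V → V → Prop} {P : ℕ → ℕ → Prop}

theorem tronForceB_of_tronInevitable :
    ∀ {f : ℕ} {t : Bool} {s : TronState V}, tronInevitable R P f t s → tronForceB R P f t s
  | 0, _, _, h => h
  | f + 1, true, s, h => by
    simp only [tronInevitable, tronForceB] at h ⊢
    split_ifs at h ⊢
    exacts [h, tronForceB_of_tronInevitable h,
      fun w hw hwv => tronForceB_of_tronInevitable (h w hw hwv)]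
  | f + 1, false, s, h => by
    simp only [tronInevitable, tronForceB] at h ⊢
    split_ifs at h ⊢ with hB
    · exact h
    · exact tronForceB_of_tronInevitable h
    · obtain ⟨w, hw, hwv⟩ : ∃ w, R s.posB w ∧ w ∉ s.visited := by simpa [TronStuck] using hB
      exact ⟨w, hw, hwv, tronForceB_of_tronInevitable (h w hw hwv)⟩

theorem tronForceA_of_tronInevitable :
    ∀ {f : ℕ} {t : Bool} {s : TronState V}, tronInevitable R P f t s → tronForceA R P f t s
  | 0, _, _, h => h
  | f + 1, true, s, h => by
    simp only [tronInevitable, tronForceA] at h ⊢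
    split_ifs at h ⊢ with hA
    · exact h
    · exact tronForceA_of_tronInevitable h
    · obtain ⟨w, hw, hwv⟩ : ∃ w, R s.posA w ∧ w ∉ s.visited := by simpa [TronStuck] using hA
      exact ⟨w, hw, hwv, tronForceA_of_tronInevitable (h w hw hwv)⟩
  | f + 1, false, s, h => by
    simp only [tronInevitable, tronForceA] at h ⊢
    split_ifs at h ⊢
    exacts [h, tronForceA_of_tronInevitable h,
      fun w hw hwv => tronForceA_of_tronInevitable (h w hw hwv)]

def TronState.swap (s : TronState V) : TronState V :=
  ⟨s.posB, s.posA, s.visited, s.scoreB, s.scoreA⟩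

theorem tronInevitable_swap :
    ∀ {f : ℕ} {t : Bool} {s : TronState V},
      tronInevitable R (fun a b => P b a) f (!t) s.swap ↔ tronInevitable R P f t s
  | 0, _, _ => Iff.rfl
  | f + 1, true, s => by
    simp only [tronInevitable, TronState.swap, Bool.not_true]
    split_ifs
    · rfl
    · exact tronInevitable_swap (t := false)
    · exact forall₃_congr fun w _ _ =>
        tronInevitable_swap (t := false) (s := ⟨w, _, _, _, _⟩)
  | f + 1, false, s => by
    simp only [tronInevitable, TronState.swap, Bool.not_false]
    split_ifs
    · rfl
    · exact tronInevitable_swap (t := true)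
    · exact forall₃_congr fun w _ _ =>
        tronInevitable_swap (t := true) (s := ⟨_, w, _, _, _⟩)

/-- Each move visits a new vertex and a player passes only when the other can move, so
`2 * (number of unvisited vertices) + 1` steps finish the game. -/
theorem tronInevitable_of_invariant [Fintype V] (Inv : TronState V → Prop)
    (hmoveA : ∀ s w, Inv s → R s.posA w → w ∉ s.visited →
      Inv ⟨w, s.posB, insert w s.visited, s.scoreA + 1, s.scoreB⟩)
    (hmoveB : ∀ s w, Inv s → R s.posB w → w ∉ s.visited →
      Inv ⟨s.posA, w, insert w s.visited, s.scoreA, s.scoreB + 1⟩)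
    (hend : ∀ s, Inv s → TronStuck R s.posA s.visited → TronStuck R s.posB s.visited →
      P s.scoreA s.scoreB) :
    ∀ {f t s}, Inv s → 2 * (Fintype.card V - #s.visited) + 1 ≤ f → tronInevitable R P f t s := by
  intro f
  induction f using Nat.strong_induction_on with
  | _ f ih =>
  intro t s hs hf
  have hstepA : ∀ f', 2 * (Fintype.card V - #s.visited) ≤ f' + 1 → f' < f →
      ∀ w, R s.posA w → w ∉ s.visited →
        tronInevitable R P f' false ⟨w, s.posB, insert w s.visited, s.scoreA + 1, s.scoreB⟩ :=
    fun f' hf' hlt w hw hwv => ih f' hlt (hmoveA s w hs hw hwv) (by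
      have := card_lt_univ_of_notMem hwv
      rw [card_insert_of_notMem hwv]; omega)
  have hstepB : ∀ f', 2 * (Fintype.card V - #s.visited) ≤ f' + 1 → f' < f →
      ∀ w, R s.posB w → w ∉ s.visited →
        tronInevitable R P f' true ⟨s.posA, w, insert w s.visited, s.scoreA, s.scoreB + 1⟩ :=
    fun f' hf' hlt w hw hwv => ih f' hlt (hmoveB s w hs hw hwv) (by
      have := card_lt_univ_of_notMem hwv
      rw [card_insert_of_notMem hwv]; omega)
  have hfree : ∀ p, ¬TronStuck R p s.visited → 2 ≤ 2 * (Fintype.card V - #s.visited) := by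
    intro p hp
    obtain ⟨w, -, hw⟩ : ∃ w, R p w ∧ w ∉ s.visited := by simpa [TronStuck] using hp
    have := card_lt_univ_of_notMem hw
    omega
  obtain ⟨f, rfl⟩ : ∃ f', f = f' + 1 := ⟨f - 1, by omega⟩
  cases t <;> simp only [tronInevitable] <;> split_ifs with hmover hother
  · exact hend s hs hother hmover
  · obtain ⟨f, rfl⟩ : ∃ f', f = f' + 1 := ⟨f - 1, by have := hfree _ hother; omega⟩
    simp only [tronInevitable]
    rw [if_neg hother]
    exact hstepA f (by omega) (by omega)
  · exact hstepB f (by omega) (by omega)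
  · exact hend s hs hmover hother
  · obtain ⟨f, rfl⟩ : ∃ f', f = f' + 1 := ⟨f - 1, by have := hfree _ hother; omega⟩
    simp only [tronInevitable]
    rw [if_neg hother]
    exact hstepB f (by omega) (by omega)
  · exact hstepA f (by omega) (by omega)

end Game

/-- `p 0, …, p (n - 1)` are the vertices of a connected component of `G` that is an induced path,
in this order. -/
structure IsPathComponent {V : Type} (G : SimpleGraph V) (n : ℕ) (p : ℕ → V) : Prop where
  injOn : ∀ i < n, ∀ j < n, p i = p j → i = j
  adj_iff : ∀ i < n, ∀ w, G.Adj (p i) w ↔ ∃ j < n, (i + 1 = j ∨ j + 1 = i) ∧ p j = w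

namespace IsPathComponent

variable {V : Type} {G : SimpleGraph V} {n : ℕ} {p : ℕ → V}

theorem reverse (hp : IsPathComponent G n p) : IsPathComponent G n (fun i => p (n - 1 - i)) where
  injOn i hi j hj h := by have := hp.injOn _ (by omega) _ (by omega) h; omega
  adj_iff i hi w := by
    rw [hp.adj_iff _ (by omega)]
    constructor
    · rintro ⟨j, hj, hij, rfl⟩
      exact ⟨n - 1 - j, by omega, by omega, by rw [show n - 1 - (n - 1 - j) = j by omega]⟩
    · rintro ⟨j, hj, hij, rfl⟩
      exact ⟨n - 1 - j, by omega, by omega, rfl⟩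

variable [DecidableEq V]

theorem card_image_range (hp : IsPathComponent G n p) {k : ℕ} (hk : k ≤ n) :
    #((range k).image p) = k := by
  rw [card_image_of_injOn, card_range]
  intro i hi j hj h
  exact hp.injOn i (by simp at hi; omega) j (by simp at hj; omega) h

theorem apply_notMem_image_range (hp : IsPathComponent G n p) {k i : ℕ} (hki : k ≤ i)
    (hi : i < n) : p i ∉ (range k).image p := by
  simp only [mem_image, mem_range, not_exists, not_and]
  intro j hj h
  have := hp.injOn j (by omega) i hi h
  omega

theorem adj_mem_image_range (hp : IsPathComponent G n p) {k : ℕ} (hk : k ≤ n) :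
    ∀ v ∈ (range k).image p, ∀ u, G.Adj v u → u ∈ (range k).image p ∨ k < n ∧ u = p k := by
  simp only [mem_image, mem_range]
  rintro _ ⟨i, hi, rfl⟩ u hu
  obtain ⟨j, hj, hij, rfl⟩ := (hp.adj_iff i (by omega) u).1 hu
  by_cases hjk : j < k
  · exact Or.inl ⟨j, hjk, rfl⟩
  · exact Or.inr ⟨by omega, by rw [show j = k by omega]⟩

variable {P : ℕ → ℕ → Prop} [Fintype V]

/-- Bob runs from `p k` to the end `p (n - 1)` of a path component while Alice is confined to `T`:
every play ends with Bob's score raised by `n - 1 - k` and Alice's by at most `#(T \ visited)`. -/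
theorem tronInevitable_run (hp : IsPathComponent G n p) {k : ℕ} (hk : k < n)
    {T : Finset V} {s : TronState V} (hposB : s.posB = p k) (hposA : s.posA ∈ T)
    (hmem : p k ∈ s.visited) (hback : 0 < k → p (k - 1) ∈ s.visited)
    (hfront : ∀ i, k < i → i < n → p i ∉ s.visited)
    (hT : ∀ v ∈ T, ∀ u, G.Adj v u → u ∈ T ∨ u ∈ s.visited)
    (hTp : ∀ i, k < i → i < n → p i ∉ T)
    (hP : ∀ a, s.scoreA ≤ a → a ≤ s.scoreA + #(T \ s.visited) → P a (s.scoreB + (n - 1 - k)))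
    {f : ℕ} {t : Bool} (hf : 2 * Fintype.card V + 1 ≤ f) :
    tronInevitable G.Adj P f t s := by
  refine tronInevitable_of_invariant (fun s' => ∃ j, k ≤ j ∧ j < n ∧ s'.posB = p j ∧
      p j ∈ s'.visited ∧ (0 < j → p (j - 1) ∈ s'.visited) ∧
      (∀ i, j < i → i < n → p i ∉ s'.visited) ∧ s'.posA ∈ T ∧ s.visited ⊆ s'.visited ∧
      s'.scoreB + (n - 1 - j) = s.scoreB + (n - 1 - k) ∧ s.scoreA ≤ s'.scoreA ∧
      s'.scoreA + #(T \ s'.visited) ≤ s.scoreA + #(T \ s.visited))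
    ?_ ?_ ?_ ⟨k, le_rfl, hk, hposB, hmem, hback, hfront, hposA, subset_rfl, rfl, le_rfl, le_rfl⟩
    (by omega)
  · rintro s' w ⟨j, hkj, hjn, hposB', hmem', hback', hfront', hposA', hsub, hB, hA, hAT⟩ hw hwv
    have hwT : w ∈ T := (hT _ hposA' w hw).resolve_right fun h => hwv (hsub h)
    refine ⟨j, hkj, hjn, hposB', mem_insert_of_mem hmem', fun h => mem_insert_of_mem (hback' h),
      fun i hji hin => ?_, hwT, hsub.trans (subset_insert _ _), hB, by dsimp only; omega, ?_⟩
    · rw [mem_insert, not_or]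
      exact ⟨fun h => hTp i (by omega) hin (h ▸ hwT), hfront' i hji hin⟩
    · have := card_erase_of_mem (mem_sdiff.2 ⟨hwT, hwv⟩)
      have := card_pos.2 ⟨w, mem_sdiff.2 ⟨hwT, hwv⟩⟩
      dsimp only
      rw [sdiff_insert]
      omega
  · rintro s' w ⟨j, hkj, hjn, hposB', hmem', hback', hfront', hposA', hsub, hB, hA, hAT⟩ hw hwv
    rw [hposB', hp.adj_iff j hjn] at hw
    obtain ⟨j', hj'n, hjj' | hjj', rfl⟩ := hw
    · subst hjj'
      refine ⟨j + 1, by omega, hj'n, rfl, mem_insert_self _ _, fun _ => mem_insert_of_mem hmem',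
        fun i hji hin => ?_, hposA', hsub.trans (subset_insert _ _), by dsimp only; omega, hA,
        le_trans (by gcongr; exact subset_insert _ _) hAT⟩
      rw [mem_insert, not_or]
      exact ⟨fun h => by have := hp.injOn i hin (j + 1) hj'n h; omega, hfront' i (by omega) hin⟩
    · exact absurd (hback' (by omega)) (by rwa [show j - 1 = j' by omega])
  · rintro s' ⟨j, hkj, hjn, hposB', hmem', hback', hfront', hposA', hsub, hB, hA, hAT⟩ - hstuck
    have hj : j + 1 = n := by
      by_contra hj
      exact hfront' (j + 1) (by omega) (by omega)
        (hstuck _ (hposB' ▸ (hp.adj_iff j hjn _).2 ⟨j + 1, by omega, Or.inl rfl, rfl⟩))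
    rw [show s'.scoreB = s.scoreB + (n - 1 - k) by omega]
    exact hP _ hA (by omega)

theorem tronInevitable_block (hp : IsPathComponent G n p) {a : ℕ} (ha : a + 1 < n)
    (hP : ∀ a', 1 ≤ a' → a' ≤ a + 1 → P a' (n - 1 - a)) {f : ℕ} (hf : 2 * Fintype.card V + 1 ≤ f) :
    tronInevitable G.Adj P f true (tronInit (p a) (p (a + 1))) := by
  have hpa : p a ∈ (range (a + 1)).image p := mem_image_of_mem _ (mem_range.2 (by omega))
  refine hp.tronInevitable_run ha rfl hpa (by simp [tronInit]) (fun _ => by simp [tronInit])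
    (fun i hi hin => ?_) (fun v hv u hu => ?_)
    (fun i hi hin => hp.apply_notMem_image_range hi.le hin)
    (fun a' ha' ha'T => ?_) hf
  · have h1 := hp.injOn i hin a (by omega)
    have h2 := hp.injOn i hin (a + 1) ha
    simp only [tronInit, mem_insert, mem_singleton, not_or]
    exact ⟨fun h => by have := h1 h; omega, fun h => by have := h2 h; omega⟩
  · exact (hp.adj_mem_image_range ha.le v hv u hu).imp_right fun h => by simp [tronInit, h.2]
  · have := card_sdiff_lt_card hpa (by simp [tronInit] : p a ∈ (tronInit (p a) (p (a + 1))).visited)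
    rw [hp.card_image_range ha.le] at this
    simp only [tronInit] at this ha' ha'T ⊢
    rw [show 1 + (n - 1 - (a + 1)) = n - 1 - a by omega]
    exact hP a' ha' (by omega)

theorem tronInevitable_after_step_down {q : ℕ → V} (hp : IsPathComponent G n p)
    (hq : IsPathComponent G n q) (hpq : ∀ i j, p i ≠ q j) {c : ℕ} (hc : 0 < c) (hcn : c < n)
    (hP : ∀ a', 2 ≤ a' → a' ≤ c + 1 → P a' n) {f : ℕ} (hf : 2 * Fintype.card V + 1 ≤ f) :
    tronInevitable G.Adj P f false ⟨p (c - 1), q 0, insert (p (c - 1)) {p c, q 0}, 2, 1⟩ := by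
  have hpc : p (c - 1) ∈ (range c).image p := mem_image_of_mem _ (mem_range.2 (by omega))
  refine hq.tronInevitable_run (by omega) rfl hpc (by simp) (fun h => absurd h (lt_irrefl 0))
    (fun i hi hin => ?_) (fun v hv u hu => ?_) (fun i _ _ h => ?_) (fun a' ha' ha'T => ?_) hf
  · have := hq.injOn i hin 0 (by omega)
    simp only [mem_insert, mem_singleton, not_or]
    exact ⟨fun h => hpq _ _ h.symm, fun h => hpq _ _ h.symm, fun h => by have := this h; omega⟩
  · exact (hp.adj_mem_image_range hcn.le v hv u hu).imp_right fun h => by simp [h.2]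
  · obtain ⟨j, -, hj⟩ := mem_image.1 h
    exact hpq _ _ hj
  · have := card_sdiff_lt_card hpc (mem_insert_self (p (c - 1)) {p c, q 0})
    rw [hp.card_image_range hcn.le] at this
    rw [show 1 + (n - 1 - 0) = n by omega]
    exact hP a' ha' (by dsimp only at ha'T; omega)

theorem tronInevitable_other {q : ℕ → V} (hp : IsPathComponent G n p)
    (hq : IsPathComponent G n q) (hpq : ∀ i j, p i ≠ q j) (hn : 2 ≤ n) {a : ℕ} (ha : a < n)
    (hP : ∀ a', 1 ≤ a' → a' ≤ max (a + 1) (n - a) → P a' n) {f : ℕ}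
    (hf : 2 * Fintype.card V + 2 ≤ f) :
    tronInevitable G.Adj P f true (tronInit (p a) (q 0)) := by
  obtain ⟨f, rfl⟩ : ∃ f', f = f' + 1 := ⟨f - 1, by omega⟩
  have hne : ∀ j < n, j ≠ a → p j ∉ ({p a, q 0} : Finset V) := by
    intro j hj hja
    simp only [mem_insert, mem_singleton, not_or]
    exact ⟨fun h => hja (hp.injOn j hj a ha h), hpq j 0⟩
  have hmove : ¬TronStuck G.Adj (p a) {p a, q 0} := by
    intro h
    by_cases hup : a + 1 < n
    · exact hne (a + 1) hup (by omega) (h _ ((hp.adj_iff a ha _).2 ⟨a + 1, hup, Or.inl rfl, rfl⟩))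
    · exact hne (a - 1) (by omega) (by omega)
        (h _ ((hp.adj_iff a ha _).2 ⟨a - 1, by omega, Or.inr (by omega), rfl⟩))
  simp only [tronInevitable, tronInit, hmove, ite_false]
  intro w hw _
  obtain ⟨j, hj, rfl | hja, rfl⟩ := (hp.adj_iff a ha w).1 hw
  · have h := hp.reverse.tronInevitable_after_step_down hq (fun i j => hpq _ _)
      (c := n - 1 - a) (f := f) (by omega) (by omega)
      (fun a' ha' ha'n => hP a' (by omega) (by omega)) (by omega)
    simp only [show n - 1 - (n - 1 - a - 1) = a + 1 by omega,
      show n - 1 - (n - 1 - a) = a by omega] at h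
    exact h
  · obtain rfl : j = a - 1 := by omega
    exact hp.tronInevitable_after_step_down hq hpq (by omega) ha
      (fun a' ha' ha'n => hP a' (by omega) (by omega)) (by omega)

/-- Alice steps from `p x` to `p (x + 1)` and runs to the end of her path, while Bob is confined
to `T`. -/
theorem tronForceA_run (hp : IsPathComponent G n p) {x : ℕ} (hx : x + 1 < n) {T : Finset V}
    {w : V} (hw : w ∈ T) (hT : ∀ v ∈ T, ∀ u, G.Adj v u → u ∈ T ∨ u = p x)
    (hTp : ∀ i, x ≤ i → i < n → p i ∉ T) (hP : ∀ b, 1 ≤ b → b ≤ #T → P (n - x) b) {f : ℕ}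
    (hf : 2 * Fintype.card V + 2 ≤ f) :
    tronForceA G.Adj P f true (tronInit (p x) w) := by
  obtain ⟨f, rfl⟩ : ∃ f', f = f' + 1 := ⟨f - 1, by omega⟩
  have hstep : p (x + 1) ∉ ({p x, w} : Finset V) := by
    simp only [mem_insert, mem_singleton, not_or]
    exact ⟨fun h => by have := hp.injOn _ hx x (by omega) h; omega,
      fun h => hTp (x + 1) (by omega) hx (h ▸ hw)⟩
  have hadj : G.Adj (p x) (p (x + 1)) := (hp.adj_iff x (by omega) _).2 ⟨x + 1, hx, Or.inl rfl, rfl⟩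
  have hmove : ¬TronStuck G.Adj (p x) {p x, w} := fun h => hstep (h _ hadj)
  simp only [tronForceA, tronInit, hmove, ite_false]
  refine ⟨p (x + 1), hadj, hstep, tronForceA_of_tronInevitable (tronInevitable_swap.1 ?_)⟩
  refine hp.tronInevitable_run hx rfl hw (mem_insert_self _ _) (fun _ => by simp [TronState.swap])
    (fun i hi hin => ?_) (fun v hv u hu => ?_) (fun i hi hin => hTp i (by omega) hin)
    (fun b hb hbT => ?_) (by omega)
  · have h1 := hp.injOn i hin x (by omega)
    have h2 := hp.injOn i hin (x + 1) hx
    simp only [TronState.swap, mem_insert, mem_singleton, not_or]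
    exact ⟨fun h => by have := h2 h; omega, fun h => by have := h1 h; omega,
      fun h => hTp i (by omega) hin (h ▸ hw)⟩
  · exact (hT v hv u hu).imp_right fun h => by simp [TronState.swap, h]
  · have := card_sdiff_lt_card hw (by simp : w ∈ insert (p (x + 1)) {p x, w})
    simp only [TronState.swap] at hb hbT this ⊢
    rw [show 1 + 1 + (n - 1 - (x + 1)) = n - x by omega]
    exact hP b hb (by omega)

theorem exists_tronForceB_of_two_mul_add_one_le {q : ℕ → V} (hp : IsPathComponent G n p)
    (hq : IsPathComponent G n q) (hpq : ∀ i j, p i ≠ q j) (hn : 2 ≤ n) {a : ℕ}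
    (ha : 2 * a + 1 ≤ n)
    (hP : (∀ a', 1 ≤ a' → a' ≤ n - a → P a' n) ∨ ∀ a', 1 ≤ a' → a' ≤ a + 1 → P a' (n - 1 - a)) :
    ∃ w, w ≠ p a ∧ tronForceB G.Adj P (tronFuel V) true (tronInit (p a) w) := by
  rcases hP with hP | hP
  · exact ⟨q 0, (hpq a 0).symm, tronForceB_of_tronInevitable <|
      hp.tronInevitable_other hq hpq hn (by omega)
        (fun a' ha' ha'n => hP a' ha' (by omega)) (by simp [tronFuel])⟩
  · refine ⟨p (a + 1), fun h => ?_, tronForceB_of_tronInevitable <|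
      hp.tronInevitable_block (by omega) hP (by simp [tronFuel])⟩
    have := hp.injOn _ (by omega) a (by omega) h
    omega

theorem exists_tronForceB {q : ℕ → V} (hp : IsPathComponent G n p)
    (hq : IsPathComponent G n q) (hpq : ∀ i j, p i ≠ q j) (hn : 2 ≤ n) {a : ℕ} (ha : a < n)
    (hP : ∀ c, 2 * c + 1 ≤ n →
      (∀ a', 1 ≤ a' → a' ≤ n - c → P a' n) ∨ ∀ a', 1 ≤ a' → a' ≤ c + 1 → P a' (n - 1 - c)) :
    ∃ w, w ≠ p a ∧ tronForceB G.Adj P (tronFuel V) true (tronInit (p a) w) := by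
  by_cases h : 2 * a + 1 ≤ n
  · exact hp.exists_tronForceB_of_two_mul_add_one_le hq hpq hn h (hP a h)
  · have := hp.reverse.exists_tronForceB_of_two_mul_add_one_le hq (fun i j => hpq _ _) hn
      (a := n - 1 - a) (by omega) (hP _ (by omega))
    rwa [show n - 1 - (n - 1 - a) = a by omega] at this

theorem tronForceA_of_start {q : ℕ → V} (hp : IsPathComponent G n p)
    (hq : IsPathComponent G n q) (hpq : ∀ i j, p i ≠ q j)
    (hcover : ∀ v, (∃ i < n, p i = v) ∨ ∃ i < n, q i = v) {x : ℕ} (hx : 1 ≤ x)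
    (hxn : x + 2 ≤ n) (hfar : ∀ b, 1 ≤ b → b ≤ n → P (n - x) b)
    (hnear : ∀ b, 1 ≤ b → b ≤ n - 1 - x → P (x + 1) b) {w : V} (hw : w ≠ p x) :
    tronForceA G.Adj P (tronFuel V) true (tronInit (p x) w) := by
  have hfuel : 2 * Fintype.card V + 2 ≤ tronFuel V := le_rfl
  rcases hcover w with ⟨y, hy, rfl⟩ | ⟨b, hb, rfl⟩
  · rcases lt_or_gt_of_ne (fun h : y = x => hw (h ▸ rfl)) with hyx | hxy
    · refine hp.tronForceA_run (by omega) (mem_image_of_mem _ (mem_range.2 hyx))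
        (fun v hv u hu => (hp.adj_mem_image_range (by omega) v hv u hu).imp_right And.right)
        (fun i hi hin => hp.apply_notMem_image_range hi hin) (fun b hb hbT => hfar b hb ?_) hfuel
      rw [hp.card_image_range (by omega)] at hbT
      omega
    · have := hp.reverse.tronForceA_run (P := P) (x := n - 1 - x) (by omega)
        (mem_image_of_mem _ (mem_range.2 (by omega : n - 1 - y < n - 1 - x)))
        (fun v hv u hu => (hp.reverse.adj_mem_image_range (by omega) v hv u hu).imp_right
          And.right)
        (fun i hi hin => hp.reverse.apply_notMem_image_range hi hin)
        (fun b hb hbT => ?_) hfuel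
      · simpa only [show n - 1 - (n - 1 - x) = x by omega, show n - 1 - (n - 1 - y) = y by omega]
          using this
      · rw [hp.reverse.card_image_range (by omega)] at hbT
        rw [show n - (n - 1 - x) = x + 1 by omega]
        exact hnear b hb hbT
  · refine hp.tronForceA_run (by omega) (mem_image_of_mem _ (mem_range.2 hb))
      (fun v hv u hu => Or.inl ?_) (fun i _ _ h => ?_) (fun b hb hbT => hfar b hb ?_) hfuel
    · obtain ⟨j, hj, rfl⟩ := mem_image.1 hv
      obtain ⟨j', hj', -, rfl⟩ := (hq.adj_iff j (mem_range.1 hj) u).1 hu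
      exact mem_image_of_mem _ (mem_range.2 hj')
    · obtain ⟨j, -, hj⟩ := mem_image.1 h
      exact hpq _ _ hj.symm
    · rwa [hq.card_image_range le_rfl] at hbT

end IsPathComponent

namespace twoPaths

variable {n : ℕ}

theorem adj_inl_inl {a b : Fin n} :
    (twoPaths n).Adj (.inl a) (.inl b) ↔ a.val + 1 = b.val ∨ b.val + 1 = a.val := by
  simp only [twoPaths, SimpleGraph.fromRel_adj, ne_eq, Sum.inl.injEq, and_iff_right_iff_imp]
  rintro h rfl
  omega

theorem adj_inr_inr {a b : Fin n} :
    (twoPaths n).Adj (.inr a) (.inr b) ↔ a.val + 1 = b.val ∨ b.val + 1 = a.val := by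
  simp only [twoPaths, SimpleGraph.fromRel_adj, ne_eq, Sum.inr.injEq, and_iff_right_iff_imp]
  rintro h rfl
  omega

theorem not_adj_inl_inr {a b : Fin n} : ¬(twoPaths n).Adj (.inl a) (.inr b) := by
  simp [twoPaths]

theorem not_adj_inr_inl {a b : Fin n} : ¬(twoPaths n).Adj (.inr a) (.inl b) := by
  simp [twoPaths]

def left (hn : 0 < n) (i : ℕ) : Fin n ⊕ Fin n := .inl ⟨min i (n - 1), by omega⟩

def right (hn : 0 < n) (i : ℕ) : Fin n ⊕ Fin n := .inr ⟨min i (n - 1), by omega⟩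

theorem left_val (hn : 0 < n) (a : Fin n) : left hn a = .inl a := by
  simp only [left, Sum.inl.injEq, Fin.ext_iff]
  omega

theorem right_val (hn : 0 < n) (a : Fin n) : right hn a = .inr a := by
  simp only [right, Sum.inr.injEq, Fin.ext_iff]
  omega

theorem left_ne_right (hn : 0 < n) (i j : ℕ) : left hn i ≠ right hn j := Sum.inl_ne_inr

theorem isPathComponent_left (hn : 0 < n) : IsPathComponent (twoPaths n) n (left hn) where
  injOn i hi j hj h := by
    simp only [left, Sum.inl.injEq, Fin.mk.injEq] at h
    omega
  adj_iff i hi w := by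
    rcases w with b | b
    · simp only [left, adj_inl_inl, Sum.inl.injEq, Fin.ext_iff]
      exact ⟨fun h => ⟨b, b.isLt, by omega, by omega⟩, fun ⟨j, hj, hij, h⟩ => by omega⟩
    · simp [left, not_adj_inl_inr]

theorem isPathComponent_right (hn : 0 < n) : IsPathComponent (twoPaths n) n (right hn) where
  injOn i hi j hj h := by
    simp only [right, Sum.inr.injEq, Fin.mk.injEq] at h
    omega
  adj_iff i hi w := by
    rcases w with b | b
    · simp [right, not_adj_inr_inl]
    · simp only [right, adj_inr_inr, Sum.inr.injEq, Fin.ext_iff]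
      exact ⟨fun h => ⟨b, b.isLt, by omega, by omega⟩, fun ⟨j, hj, hij, h⟩ => by omega⟩

theorem exists_eq_left_or_right (hn : 0 < n) (v : Fin n ⊕ Fin n) :
    (∃ i < n, left hn i = v) ∨ ∃ i < n, right hn i = v := by
  rcases v with a | a
  · exact Or.inl ⟨a, a.isLt, left_val hn a⟩
  · exact Or.inr ⟨a, a.isLt, right_val hn a⟩

end twoPaths

open twoPaths in
theorem bobCanForce_twoPaths {P : ℕ → ℕ → Prop} (hn : 2 ≤ n)
    (hP : ∀ a, 2 * a + 1 ≤ n →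
      (∀ a', 1 ≤ a' → a' ≤ n - a → P a' n) ∨ ∀ a', 1 ≤ a' → a' ≤ a + 1 → P a' (n - 1 - a)) :
    bobCanForce (twoPaths n) P := by
  have hn0 : 0 < n := by omega
  rintro (a | a)
  · simpa only [left_val] using (isPathComponent_left hn0).exists_tronForceB
      (isPathComponent_right hn0) (left_ne_right hn0) hn a.isLt hP
  · simpa only [right_val] using (isPathComponent_right hn0).exists_tronForceB
      (isPathComponent_left hn0) (fun i j => (left_ne_right hn0 j i).symm) hn a.isLt hP

open twoPaths in
theorem aliceCanForce_twoPaths {P : ℕ → ℕ → Prop} {x : ℕ} (hx : 1 ≤ x) (hxn : x + 2 ≤ n)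
    (hfar : ∀ b, 1 ≤ b → b ≤ n → P (n - x) b)
    (hnear : ∀ b, 1 ≤ b → b ≤ n - 1 - x → P (x + 1) b) :
    aliceCanForce (twoPaths n) P :=
  have hn0 : 0 < n := by omega
  ⟨left hn0 x, fun _ hw => (isPathComponent_left hn0).tronForceA_of_start
    (isPathComponent_right hn0) (left_ne_right hn0) (exists_eq_left_or_right hn0) hx hxn hfar
    hnear hw⟩


open Real Filter
open scoped goldenRatio

theorem two_div_sqrt_five_sub_one : 2 / (√5 - 1) = φ := by
  have h5 : √5 * √5 = 5 := Real.mul_self_sqrt (by norm_num)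
  have h1 : 1 < √5 := by nlinarith [Real.sqrt_nonneg 5]
  rw [div_eq_iff (by linarith), goldenRatio]
  nlinarith

theorem three_halves_lt_goldenRatio : 3 / 2 < φ := by
  have : 2 < √5 := by rw [Real.lt_sqrt] <;> norm_num
  rw [goldenRatio]
  linarith

theorem goldenRatio_lt_seven_quarters : φ < 7 / 4 := by
  have : √5 < 5 / 2 := by rw [Real.sqrt_lt'] <;> norm_num
  rw [goldenRatio]
  linarith

theorem eventually_forall_golden_split {r : ℝ} (hr0 : 0 < r) (hr : r < φ) :
    ∀ᶠ n : ℕ in atTop, ∀ a < n,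
      r * ((n - a : ℕ) : ℝ) ≤ n ∨ r * ((a + 1 : ℕ) : ℝ) ≤ ((n - 1 - a : ℕ) : ℝ) := by
  have hc : 0 < 1 + r - r ^ 2 := by nlinarith [goldenRatio_sq, one_lt_goldenRatio]
  filter_upwards [tendsto_natCast_atTop_atTop.eventually_ge_atTop (r * (1 + r) / (1 + r - r ^ 2))]
    with n hn a ha
  rw [div_le_iff₀ hc] at hn
  rw [Nat.cast_sub ha.le, Nat.sub_sub, Nat.cast_sub (by omega)]
  push_cast
  by_contra! h
  nlinarith [h.1, h.2]

theorem exists_golden_start {n : ℕ} (hn : 4 ≤ n) :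
    ∃ x, 1 ≤ x ∧ x + 2 ≤ n ∧ (n : ℝ) ≤ φ * ((n - x : ℕ) : ℝ) ∧
      ((n - 1 - x : ℕ) : ℝ) ≤ φ * ((x + 1 : ℕ) : ℝ) := by
  have hn' : (4 : ℝ) ≤ n := by exact_mod_cast hn
  have hφ := three_halves_lt_goldenRatio
  have hφ' := goldenRatio_lt_seven_quarters
  set x := ⌊(2 - φ) * n⌋₊
  have hxle : (x : ℝ) ≤ (2 - φ) * n := Nat.floor_le (by nlinarith)
  have hxlt : (2 - φ) * n < x + 1 := Nat.lt_floor_add_one _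
  have hx1 : 1 ≤ x := Nat.le_floor (by push_cast; nlinarith)
  have hx2 : x + 2 ≤ n := by
    have : (x : ℝ) + 2 ≤ n := by nlinarith
    exact_mod_cast this
  refine ⟨x, hx1, hx2, ?_, ?_⟩
  · rw [Nat.cast_sub (by omega)]
    nlinarith [mul_le_mul_of_nonneg_left hxle goldenRatio_pos.le,
      congrArg (· * (n : ℝ)) goldenRatio_sq]
  · rw [Nat.sub_sub, Nat.cast_sub (by omega)]
    push_cast
    nlinarith [mul_le_mul_of_nonneg_left hxlt.le (by linarith : (0 : ℝ) ≤ φ + 1),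
      congrArg (· * (n : ℝ)) goldenRatio_sq]

theorem le_div_of_mul_le_of_le {r : ℝ} {a m b : ℕ} (hr : 0 ≤ r) (ha : 1 ≤ a) (ham : a ≤ m)
    (h : r * m ≤ b) : r ≤ b / a := by
  rw [le_div_iff₀ (by exact_mod_cast ha)]
  exact (mul_le_mul_of_nonneg_left (by exact_mod_cast ham) hr).trans h

theorem div_le_of_le_of_le_mul {r : ℝ} {a m b : ℕ} (ha : 1 ≤ a) (hbm : b ≤ m)
    (h : (m : ℝ) ≤ r * a) : (b : ℝ) / a ≤ r := by
  rw [div_le_iff₀ (by exact_mod_cast ha)]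
  exact (Nat.cast_le.2 hbm).trans h

/-- On the disjoint union of two paths `P_n`, the optimal
ratio Bob/Alice tends to `2 / (√5 - 1)` as `n → ∞`: for every `ε > 0` and all
large `n`, Bob can force the ratio to be at least `2/(√5-1) - ε` and Alice can
force it to be at most `2/(√5-1) + ε`. -/
theorem tron_two_paths_ratio_tendsto_golden :
    ∀ ε : ℝ, 0 < ε → ∃ N : ℕ, ∀ n, N ≤ n →
      bobCanForce (twoPaths n)
        (fun a b => 2 / (Real.sqrt 5 - 1) - ε ≤ (b : ℝ) / (a : ℝ)) ∧
      aliceCanForce (twoPaths n)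
        (fun a b => (b : ℝ) / (a : ℝ) ≤ 2 / (Real.sqrt 5 - 1) + ε) := by
  intro ε hε
  rw [two_div_sqrt_five_sub_one]
  set r := max (φ - ε) (3 / 2)
  have hr : r < φ := max_lt (by linarith) three_halves_lt_goldenRatio
  have hr0 : 0 < r := lt_max_of_lt_right (by norm_num)
  obtain ⟨N, hN⟩ := eventually_atTop.1 <|
    (eventually_forall_golden_split hr0 hr).and (eventually_ge_atTop 4)
  refine ⟨N, fun n hn => ?_⟩
  obtain ⟨hsplit, h4⟩ := hN n hn
  obtain ⟨x, hx1, hx2, hfar, hnear⟩ := exists_golden_start h4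
  have hbob : ∀ {a m b : ℕ}, 1 ≤ a → a ≤ m → r * m ≤ b → φ - ε ≤ (b : ℝ) / a :=
    fun ha ham h => (le_max_left _ _).trans (le_div_of_mul_le_of_le hr0.le ha ham h)
  have halice : ∀ {a m b : ℕ}, 1 ≤ a → b ≤ m → (m : ℝ) ≤ φ * a → (b : ℝ) / a ≤ φ + ε :=
    fun ha hbm h => (div_le_of_le_of_le_mul ha hbm h).trans (by linarith)
  refine ⟨bobCanForce_twoPaths (by omega) fun a ha => (hsplit a (by omega)).imp
      (fun h a' ha' ha'n => hbob ha' ha'n h) (fun h a' ha' ha'n => hbob ha' ha'n h),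
    aliceCanForce_twoPaths hx1 hx2 (fun b _ hb => halice (by omega) hb hfar)
      (fun b _ hb => halice (by omega) hb hnear)⟩
end

section
/- Let G be a graph on which, under optimal Tron play, Bob's score strictly exceeds Alice's score. Let F be the graph obtained from G by adding a new vertex v adjacent to every vertex of G. Then in the Tron game on F, the optimal ratio (Alice's score)/(Bob's score) on F is at least the optimal ratio (Bob's score)/(Alice's score) on G. -/
/-- `G` together with a new universal vertex (`none`) adjacent to everything. -/
def addUniversal {V : Type} (G : SimpleGraph V) : SimpleGraph (Option V) :=
  SimpleGraph.fromRel (fun x y =>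
    match x, y with
    | none, some _ => True
    | some a, some b => G.Adj a b
    | _, _ => False)

/-!
Alice opens on the universal vertex `v`. Once Bob has chosen `u`, Alice moves to the vertex `w`
with which Bob would answer an opening at `u` in `G`. From then on `v` is spent, so the game on
`F` is the game on `G` from the opening `(u, w)` with the roles exchanged, and Alice follows
Bob's strategy there. Her final score is Bob's score on `G` plus one for `v`, and Bob's is
Alice's score on `G`, so the ratio can only grow.
-/

namespace Tron

open Finset

variable {V : Type}

section AddUniversal

variable (G : SimpleGraph V)

@[simp]
lemma addUniversal_adj_some_some {x y : V} :
    (addUniversal G).Adj (some x) (some y) ↔ G.Adj x y := by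
  simp only [addUniversal, SimpleGraph.fromRel_adj, ne_eq, Option.some.injEq]
  exact ⟨fun h => h.2.elim id G.adj_symm, fun h => ⟨G.ne_of_adj h, Or.inl h⟩⟩

lemma addUniversal_adj_none_some (y : V) : (addUniversal G).Adj none (some y) := by
  simp [addUniversal]

lemma tronStuck_addUniversal_some_iff {x : V} {vis : Finset V} :
    TronStuck (addUniversal G).Adj (some x) (insertNone vis) ↔ TronStuck G.Adj x vis := by
  simp [TronStuck, Option.forall]

/-- The position on `addUniversal G` in which Alice, having opened on the universal vertex,
plays Bob's part of `s` and Bob plays Alice's. -/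
def _root_.TronState.liftSwap (s : TronState V) : TronState (Option V) :=
  ⟨some s.posB, some s.posA, insertNone s.visited, s.scoreB + 1, s.scoreA⟩

lemma tronStuck_liftSwap_posA_iff (s : TronState V) :
    TronStuck (addUniversal G).Adj s.liftSwap.posA s.liftSwap.visited ↔
      TronStuck G.Adj s.posB s.visited :=
  tronStuck_addUniversal_some_iff G

lemma tronStuck_liftSwap_posB_iff (s : TronState V) :
    TronStuck (addUniversal G).Adj s.liftSwap.posB s.liftSwap.visited ↔
      TronStuck G.Adj s.posA s.visited :=
  tronStuck_addUniversal_some_iff G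

end AddUniversal

lemma _root_.Finset.insert_some_insertNone [DecidableEq V] (y : V) (vis : Finset V) :
    insert (some y) (insertNone vis) = insertNone (insert y vis) := by
  ext (_ | x) <;> simp

variable [DecidableEq V]

lemma tronForceB_of_tronStuck (R : V → V → Prop) (P : ℕ → ℕ → Prop) (f : ℕ) (t : Bool)
    (s : TronState V) (hA : TronStuck R s.posA s.visited) (hB : TronStuck R s.posB s.visited) :
    tronForceB R P f t s ↔ P s.scoreA s.scoreB := by
  cases f <;> cases t <;> simp [tronForceB, hA, hB]

section Fuel

variable [Fintype V] (R : V → V → Prop) (P : ℕ → ℕ → Prop)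

lemma card_compl_insert_add_one {vis : Finset V} {w : V} (hw : w ∉ vis) :
    #(insert w vis)ᶜ + 1 = #visᶜ := by
  rw [compl_insert, card_erase_add_one (mem_compl.2 hw)]

lemma card_compl_pos_of_not_tronStuck {p : V} {vis : Finset V} (h : ¬TronStuck R p vis) :
    0 < #visᶜ := by
  obtain ⟨w, -, hw⟩ : ∃ w, R p w ∧ w ∉ vis := by simpa [TronStuck] using h
  exact card_pos.2 ⟨w, mem_compl.2 hw⟩

lemma tronForceB_succ_iff_of_forall_move (g : ℕ) (t : Bool) (s : TronState V)
    (hstuck : ¬(TronStuck R s.posA s.visited ∧ TronStuck R s.posB s.visited))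
    (hg : 2 * #s.visitedᶜ ≤ g + 1)
    (ih_move : ∀ h ≤ g, 2 * #s.visitedᶜ ≤ h + 2 → ∀ w ∉ s.visited, ∀ t (s' : TronState V),
      s'.visited = insert w s.visited → (tronForceB R P (h + 1) t s' ↔ tronForceB R P h t s')) :
    tronForceB R P (g + 2) t s ↔ tronForceB R P (g + 1) t s := by
  cases t with
  | true =>
    rw [tronForceB.eq_2, tronForceB.eq_2]
    by_cases hA : TronStuck R s.posA s.visited
    · have hB : ¬TronStuck R s.posB s.visited := fun hB => hstuck ⟨hA, hB⟩
      have := card_compl_pos_of_not_tronStuck R hB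
      obtain ⟨h, rfl⟩ : ∃ h, g = h + 1 := ⟨g - 1, by omega⟩
      simp only [if_pos hA, if_neg hB, tronForceB.eq_3]
      exact exists_congr fun w => and_congr_right fun _ => and_congr_right fun hw =>
        ih_move h (by omega) (by omega) w hw _ _ rfl
    · simp only [if_neg hA]
      exact forall_congr' fun w => imp_congr_right fun _ => imp_congr_right fun hw =>
        ih_move g le_rfl (by omega) w hw _ _ rfl
  | false =>
    rw [tronForceB.eq_3, tronForceB.eq_3]
    by_cases hB : TronStuck R s.posB s.visited
    · have hA : ¬TronStuck R s.posA s.visited := fun hA => hstuck ⟨hA, hB⟩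
      have := card_compl_pos_of_not_tronStuck R hA
      obtain ⟨h, rfl⟩ : ∃ h, g = h + 1 := ⟨g - 1, by omega⟩
      simp only [if_pos hB, if_neg hA, tronForceB.eq_2]
      exact forall_congr' fun w => imp_congr_right fun _ => imp_congr_right fun hw =>
        ih_move h (by omega) (by omega) w hw _ _ rfl
    · simp only [if_neg hB]
      exact exists_congr fun w => and_congr_right fun _ => and_congr_right fun hw =>
        ih_move g le_rfl (by omega) w hw _ _ rfl

-- A position with `k` unvisited vertices is decided within `2 * k` turns, since of two
-- consecutive turns at most one is a pass.
theorem tronForceB_succ_iff (f : ℕ) (t : Bool) (s : TronState V) (hf : 2 * #s.visitedᶜ ≤ f) :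
    tronForceB R P (f + 1) t s ↔ tronForceB R P f t s := by
  induction f using Nat.strong_induction_on generalizing t s with
  | _ f ih =>
  by_cases hstuck : TronStuck R s.posA s.visited ∧ TronStuck R s.posB s.visited
  · rw [tronForceB_of_tronStuck R P _ t s hstuck.1 hstuck.2,
      tronForceB_of_tronStuck R P _ t s hstuck.1 hstuck.2]
  have hk : 0 < #s.visitedᶜ := by
    rw [not_and_or] at hstuck
    exact hstuck.elim (card_compl_pos_of_not_tronStuck R) (card_compl_pos_of_not_tronStuck R)
  obtain ⟨g, rfl⟩ : ∃ g, f = g + 1 := ⟨f - 1, by omega⟩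
  refine tronForceB_succ_iff_of_forall_move R P g t s hstuck (by omega) ?_
  intro h hg hh w hw t s' hs'
  exact ih h (by omega) t s' (by rw [hs']; have := card_compl_insert_add_one hw; omega)

end Fuel

section Simulation

variable {G : SimpleGraph V} {P P' : ℕ → ℕ → Prop} {f : ℕ}

lemma tronForceA_succ_false_liftSwap (hP : ∀ a b, P a b → P' (b + 1) a)
    (ih : ∀ s : TronState V,
      tronForceB G.Adj P f false s → tronForceA (addUniversal G).Adj P' f true s.liftSwap)
    (s : TronState V) (h : tronForceB G.Adj P (f + 1) true s) :
    tronForceA (addUniversal G).Adj P' (f + 1) false s.liftSwap := by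
  have hA' := tronStuck_liftSwap_posB_iff G s
  have hB' := tronStuck_liftSwap_posA_iff G s
  rw [tronForceB.eq_2] at h
  rw [tronForceA.eq_3]
  by_cases hA : TronStuck G.Adj s.posA s.visited
  · rw [if_pos hA] at h
    rw [if_pos (hA'.2 hA)]
    by_cases hB : TronStuck G.Adj s.posB s.visited
    · rw [if_pos hB] at h
      rw [if_pos (hB'.2 hB)]
      exact hP _ _ h
    · rw [if_neg hB] at h
      rw [if_neg (mt hB'.1 hB)]
      exact ih s h
  · rw [if_neg hA] at h
    rw [if_neg (mt hA'.1 hA)]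
    rintro (_ | y) hy hyv
    · exact absurd none_mem_insertNone hyv
    have hy : G.Adj s.posA y := (addUniversal_adj_some_some G).1 hy
    have hyv : y ∉ s.visited := by simpa [TronState.liftSwap] using hyv
    simp only [TronState.liftSwap, insert_some_insertNone]
    exact ih _ (h y hy hyv)

lemma tronForceA_succ_true_liftSwap (hP : ∀ a b, P a b → P' (b + 1) a)
    (ih : ∀ s : TronState V,
      tronForceB G.Adj P f true s → tronForceA (addUniversal G).Adj P' f false s.liftSwap)
    (s : TronState V) (h : tronForceB G.Adj P (f + 1) false s) :
    tronForceA (addUniversal G).Adj P' (f + 1) true s.liftSwap := by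
  have hA' := tronStuck_liftSwap_posB_iff G s
  have hB' := tronStuck_liftSwap_posA_iff G s
  rw [tronForceB.eq_3] at h
  rw [tronForceA.eq_2]
  by_cases hB : TronStuck G.Adj s.posB s.visited
  · rw [if_pos hB] at h
    rw [if_pos (hB'.2 hB)]
    by_cases hA : TronStuck G.Adj s.posA s.visited
    · rw [if_pos hA] at h
      rw [if_pos (hA'.2 hA)]
      exact hP _ _ h
    · rw [if_neg hA] at h
      rw [if_neg (mt hA'.1 hA)]
      exact ih s h
  · rw [if_neg hB] at h
    rw [if_neg (mt hB'.1 hB)]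
    obtain ⟨y, hy, hyv, h⟩ := h
    refine ⟨some y, (addUniversal_adj_some_some G).2 hy, by simpa [TronState.liftSwap] using hyv, ?_⟩
    simp only [TronState.liftSwap, insert_some_insertNone]
    exact ih _ h

theorem tronForceA_liftSwap_of_tronForceB (hP : ∀ a b, P a b → P' (b + 1) a) (t : Bool)
    (s : TronState V) (h : tronForceB G.Adj P f t s) :
    tronForceA (addUniversal G).Adj P' f (!t) s.liftSwap := by
  induction f generalizing t s with
  | zero =>
    rw [tronForceB.eq_1] at h
    rw [tronForceA.eq_1]
    exact hP _ _ h
  | succ f ih =>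
    cases t with
    | true => exact tronForceA_succ_false_liftSwap hP (ih false) s h
    | false => exact tronForceA_succ_true_liftSwap hP (ih true) s h

lemma tronForceA_succ_tronInit_none {u w : V} (hwu : w ≠ u)
    (h : tronForceA (addUniversal G).Adj P' f false (tronInit u w).liftSwap) :
    tronForceA (addUniversal G).Adj P' (f + 1) true (tronInit none (some u)) := by
  have hw : some w ∉ ({none, some u} : Finset (Option V)) := by simp [hwu]
  rw [tronForceA.eq_2, if_neg fun hstuck => hw (hstuck _ (addUniversal_adj_none_some G w))]
  refine ⟨some w, addUniversal_adj_none_some G w, hw, ?_⟩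
  have hvis : insert (some w) {none, some u} = insertNone {u, w} := by
    ext (_ | x) <;> simp [or_comm]
  simpa [TronState.liftSwap, tronInit, hvis] using h

end Simulation

end Tron

open Tron Finset

theorem tron_super_vertex_general
    {V : Type} [Fintype V] [DecidableEq V] (G : SimpleGraph V) :
    ∀ q : ℝ, bobCanForce G (fun a b => q ≤ (b : ℝ) / (a : ℝ)) →
      aliceCanForce (addUniversal G) (fun a b => q ≤ (a : ℝ) / (b : ℝ)) := by
  intro q hq
  refine ⟨none, ?_⟩
  rintro (_ | u) hu
  · exact absurd rfl hu
  obtain ⟨w, hwu, hw⟩ := hq u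
  have hP : ∀ a b : ℕ, q ≤ (b : ℝ) / a → q ≤ ((b + 1 : ℕ) : ℝ) / a := fun a b h =>
    h.trans (div_le_div_of_nonneg_right (by simp) a.cast_nonneg)
  have hfuel : 2 * #({u, w} : Finset V)ᶜ ≤ tronFuel V := by
    have := card_le_univ ({u, w} : Finset V)ᶜ
    simp only [tronFuel]
    omega
  have hF : tronFuel (Option V) = tronFuel V + 1 + 1 := by
    simp only [tronFuel, Fintype.card_option]
    ring
  rw [hF]
  exact tronForceA_succ_tronInit_none hwu <| tronForceA_liftSwap_of_tronForceB hP true _ <|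
    (tronForceB_succ_iff G.Adj _ _ true _ hfuel).2 hw

/-- If on `G` Bob's optimal score strictly exceeds Alice's,
and `F` is `G` plus a universal vertex, then the optimal ratio Alice/Bob on `F`
is at least the optimal ratio Bob/Alice on `G`: any ratio `q` that Bob can
force on `G` can be forced (with roles exchanged) by Alice on `F`. -/
theorem tron_super_vertex
    {V : Type} [Fintype V] [DecidableEq V] (G : SimpleGraph V)
    (hwin : bobCanForce G (fun a b => a < b)) :
    ∀ q : ℝ, bobCanForce G (fun a b => q ≤ (b : ℝ) / (a : ℝ)) →
      aliceCanForce (addUniversal G) (fun a b => q ≤ (a : ℝ) / (b : ℝ)) :=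
  tron_super_vertex_general G
end

section
/- In the complete graph K_n with n odd, the Tron game under optimal play is such that Alice wins (her score exceeds Bob's), and every vertex is an optimal starting vertex for Alice. -/
/-!
On a complete graph a player whose position is visited is stuck only once every vertex is
visited, so nobody passes and the players simply alternate taking unvisited vertices: of `r`
remaining vertices the player to move gets `⌈r/2⌉` and the other `⌊r/2⌋`. After the two start
vertices of `K_n` an odd number `n - 2` remain, and Alice, moving first, gets one more than Bob.
-/

section Stuck

variable {V : Type} [DecidableEq V] {R : V → V → Prop} {P : ℕ → ℕ → Prop}

theorem tronForceA_iff_of_stuck {f : ℕ} {turn : Bool} {s : TronState V}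
    (hA : TronStuck R s.posA s.visited) (hB : TronStuck R s.posB s.visited) :
    tronForceA R P f turn s ↔ P s.scoreA s.scoreB := by
  cases f <;> cases turn <;> simp [tronForceA, hA, hB]

end Stuck

section CompleteGraph

variable {V : Type} [Fintype V] [DecidableEq V]

theorem tronStuck_top_iff {p : V} {vis : Finset V} (hp : p ∈ vis) :
    TronStuck (⊤ : SimpleGraph V).Adj p vis ↔ vis = Finset.univ := by
  refine ⟨fun h => Finset.eq_univ_of_forall fun w => ?_, fun h w _ => h ▸ Finset.mem_univ w⟩
  by_cases hw : p = w
  · exact hw ▸ hp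
  · exact h w hw

theorem tronForceA_top_of_remaining {P : ℕ → ℕ → Prop} (r : ℕ) :
    ∀ (f : ℕ) (turn : Bool) (s : TronState V), s.posA ∈ s.visited → s.posB ∈ s.visited →
      s.visited.card + r = Fintype.card V → r ≤ f →
      P (s.scoreA + (r + turn.toNat) / 2) (s.scoreB + (r + (!turn).toNat) / 2) →
      tronForceA (⊤ : SimpleGraph V).Adj P f turn s := by
  induction r with
  | zero =>
    intro f turn s hA hB hr _ hP
    have hvis : s.visited = Finset.univ := Finset.eq_univ_of_card _ (by simpa using hr)
    rw [tronForceA_iff_of_stuck ((tronStuck_top_iff hA).2 hvis) ((tronStuck_top_iff hB).2 hvis)]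
    cases turn <;> simpa using hP
  | succ r ih =>
    intro f turn s hA hB hr hf hP
    obtain ⟨f, rfl⟩ : ∃ f', f = f' + 1 := ⟨f - 1, by omega⟩
    have hlt : s.visited.card < Fintype.card V := by omega
    have hnst {p : V} (hp : p ∈ s.visited) : ¬ TronStuck (⊤ : SimpleGraph V).Adj p s.visited := by
      rw [tronStuck_top_iff hp]
      exact (Finset.card_lt_iff_ne_univ _).1 hlt
    cases turn with
    | true =>
      obtain ⟨u, -, hu⟩ := Finset.exists_mem_notMem_of_card_lt_card (t := Finset.univ)
        (by rwa [Finset.card_univ] : s.visited.card < Finset.univ.card)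
      simp only [tronForceA, if_neg (hnst hA)]
      refine ⟨u, fun h => hu (h ▸ hA), hu, ih f false _ (Finset.mem_insert_self _ _)
        (Finset.mem_insert_of_mem hB) (by rw [Finset.card_insert_of_notMem hu]; omega)
        (by omega) ?_⟩
      simp only [Bool.toNat_true, Bool.toNat_false, Bool.not_true, Bool.not_false, add_zero]
        at hP ⊢
      convert hP using 1
      omega
    | false =>
      simp only [tronForceA, if_neg (hnst hB)]
      intro w _ hw
      refine ih f true _ (Finset.mem_insert_of_mem hA) (Finset.mem_insert_self _ _)
        (by rw [Finset.card_insert_of_notMem hw]; omega) (by omega) ?_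
      simp only [Bool.toNat_true, Bool.toNat_false, Bool.not_true, Bool.not_false, add_zero]
        at hP ⊢
      convert hP using 1
      omega

theorem tronForceA_top_tronInit_of_odd_card (hV : Odd (Fintype.card V)) {v w : V}
    (hwv : w ≠ v) :
    tronForceA (⊤ : SimpleGraph V).Adj (fun a b => b < a) (tronFuel V) true (tronInit v w) := by
  have hcard : (tronInit v w).visited.card = 2 := Finset.card_pair hwv.symm
  have h2 : 2 ≤ Fintype.card V := hcard ▸ (tronInit v w).visited.card_le_univ
  obtain ⟨m, hm⟩ := hV
  refine tronForceA_top_of_remaining (2 * m - 1) _ true _ (by simp [tronInit])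
    (by simp [tronInit]) (by omega) (by simp only [tronFuel]; omega) ?_
  simp only [tronInit, Bool.toNat_true, Bool.not_true, Bool.toNat_false]
  omega

end CompleteGraph

theorem tron_complete_graph_odd_general
    (n : ℕ) (hodd : Odd n) :
    aliceCanForce (⊤ : SimpleGraph (Fin n)) (fun a b => b < a) ∧
    ∀ v : Fin n, ∀ w, w ≠ v →
      tronForceA (⊤ : SimpleGraph (Fin n)).Adj (fun a b => b < a)
        (tronFuel (Fin n)) true (tronInit v w) := by
  have hwin (v w : Fin n) (hwv : w ≠ v) := tronForceA_top_tronInit_of_odd_card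
    (by rwa [Fintype.card_fin]) hwv
  obtain ⟨m, rfl⟩ := hodd
  exact ⟨⟨0, hwin 0⟩, hwin⟩

/-- On the complete graph `K_n` with `n` odd, Alice wins
under optimal play, and every vertex is an optimal starting vertex for her:
from every start vertex she can force her score to exceed Bob's. -/
theorem tron_complete_graph_odd
    (n : ℕ) (hodd : Odd n) (hn : 3 ≤ n) :
    aliceCanForce (⊤ : SimpleGraph (Fin n)) (fun a b => b < a) ∧
    ∀ v : Fin n, ∀ w, w ≠ v →
      tronForceA (⊤ : SimpleGraph (Fin n)).Adj (fun a b => b < a)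
        (tronFuel (Fin n)) true (tronInit v w) :=
  tron_complete_graph_odd_general n hodd
end

section
/- The double-tree of degree d >= 2 and height h has a Hamiltonian path from one of its two roots to the other. -/
/-- Vertices of a complete `d`-ary tree of height `h` are lists of child
indices (root-to-vertex paths): entries `< d`, length `≤ h`.  A vertex of the
double-tree is such a list tagged with the half (`true` = upper). -/
def dtValid (d h : ℕ) (p : Bool × List ℕ) : Prop :=
  p.2.length ≤ h ∧ ∀ x ∈ p.2, x < d

/-- Leaves are the vertices at depth exactly `h`. -/
def dtLeaf (h : ℕ) (p : Bool × List ℕ) : Prop := p.2.length = h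

/-- Left-to-right (0-based) index of a leaf: the value of its digit list in
base `d`.  The leaf named `u^j_n` (or `v^j_n`), `1 ≤ j ≤ l = d^(h-1)`,
`1 ≤ n ≤ d`, has index `(j-1)*d + (n-1)`. -/
def dtOrd (d : ℕ) (l : List ℕ) : ℕ := l.foldl (fun a x => a * d + x) 0

/-- The cross edges `E₂` in terms of the 0-based leaf indices `s` (upper) and
`t` (lower): `u^j_n ~ v^j_m` for `n ≤ m`, `u^j_n ~ v^(j+1)_m` for `m < n`, and
`u^l_n ~ v^1_m` for `m < n`. -/
def dtCross (d h s t : ℕ) : Prop :=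
  (s / d = t / d ∧ s % d ≤ t % d) ∨
  (t / d = s / d + 1 ∧ t % d < s % d) ∨
  (s / d + 1 = d ^ (h - 1) ∧ t / d = 0 ∧ t % d < s % d)

/-- The double-tree of degree `d` and height `h`: two complete `d`-ary trees
of height `h`, leaf edges `E₁` joining consecutive leaves inside each half,
and cross edges `E₂` between the two leaf rows. -/
def doubleTree (d h : ℕ) : SimpleGraph (Bool × List ℕ) :=
  SimpleGraph.fromRel (fun p q =>
    dtValid d h p ∧ dtValid d h q ∧
    ((p.1 = q.1 ∧ ∃ a, q.2 = p.2 ++ [a]) ∨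
     (p.1 = q.1 ∧ dtLeaf h p ∧ dtLeaf h q ∧ dtOrd d q.2 = dtOrd d p.2 + 1) ∨
     (p.1 = true ∧ q.1 = false ∧ dtLeaf h p ∧ dtLeaf h q ∧
       dtCross d h (dtOrd d p.2) (dtOrd d q.2))))

/-- The digit list of the leaf with 0-based index `t`. -/
def dtLeafList (d h t : ℕ) : List ℕ :=
  (List.range h).map (fun i => t / d ^ (h - 1 - i) % d)

/-- The upper leaf with 0-based index `t` (`u^j_n` for `t = (j-1)*d+(n-1)`). -/
def uLeaf (d h t : ℕ) : Bool × List ℕ := (true, dtLeafList d h t)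

/-- The lower leaf with 0-based index `t`. -/
def vLeaf (d h t : ℕ) : Bool × List ℕ := (false, dtLeafList d h t)

/-!
Each half has a Hamiltonian path from its root to its rightmost leaf. Going down the upper half
along it, crossing the edge `u^l_d v^l_d` and running the lower copy backwards gives the path.

Such a path exists by induction on the height, together with two companions in the same half:
leftmost leaf to rightmost leaf, and leftmost leaf to root. Each of the three visits the root and
the `d` subtrees in a suitable order; consecutive subtrees are joined by the leaf-path edge from
the last leaf of one to the first leaf of the next, so a subtree crossed from its first to its
last leaf is covered by the second path, one entered or left at its root by the first or third.
-/

namespace List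

variable {α β : Type*} {R : α → α → Prop}

structure IsChainFromTo (R : α → α → Prop) (l : List α) (a b : α) : Prop where
  isChain : l.IsChain R
  head?_eq : l.head? = some a
  getLast?_eq : l.getLast? = some b

namespace IsChainFromTo

theorem singleton (a : α) : IsChainFromTo R [a] a a := ⟨.singleton a, rfl, rfl⟩

theorem append {l m : List α} {a b c e : α} (hl : IsChainFromTo R l a b) (hbc : R b c)
    (hm : IsChainFromTo R m c e) : IsChainFromTo R (l ++ m) a e where
  isChain := hl.isChain.append hm.isChain <| by
    rw [hl.getLast?_eq, hm.head?_eq]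
    simpa using hbc
  head?_eq := by rw [head?_append, hl.head?_eq]; rfl
  getLast?_eq := by rw [getLast?_append, hm.getLast?_eq]; rfl

theorem cons {l : List α} {a c e : α} (hac : R a c) (hl : IsChainFromTo R l c e) :
    IsChainFromTo R (a :: l) a e :=
  (singleton a).append hac hl

theorem map {S : β → β → Prop} {l : List α} (f : α → β)
    (hf : ∀ x ∈ l, ∀ y ∈ l, R x y → S (f x) (f y)) {a b : α}
    (hl : IsChainFromTo R l a b) :
    IsChainFromTo S (l.map f) (f a) (f b) where
  isChain := (isChain_map f).2 <| hl.isChain.imp_of_mem_imp fun x y hx hy => hf x hx y hy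
  head?_eq := by rw [head?_map, hl.head?_eq]; rfl
  getLast?_eq := by rw [getLast?_map, hl.getLast?_eq]; rfl

theorem reverse (hR : Std.Symm R) {l : List α} {a b : α} (hl : IsChainFromTo R l a b) :
    IsChainFromTo R l.reverse b a where
  isChain := isChain_reverse.2 <| hl.isChain.imp fun _ _ h => hR.symm _ _ h
  head?_eq := by rw [head?_reverse, hl.getLast?_eq]
  getLast?_eq := by rw [getLast?_reverse, hl.head?_eq]

end IsChainFromTo

end List

namespace SimpleGraph

variable {V : Type*} [DecidableEq V] {G : SimpleGraph V}

theorem exists_isHamiltonian_induce_of_isChainFromTo {s : Set V} {l : List V} {a b : V}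
    (ha : a ∈ s) (hb : b ∈ s) (hl : l.IsChainFromTo G.Adj a b) (hnodup : l.Nodup)
    (hmem : ∀ x, x ∈ l ↔ x ∈ s) :
    ∃ p : (G.induce s).Walk ⟨a, ha⟩ ⟨b, hb⟩, p.IsHamiltonian := by
  have hne : l ≠ [] := fun h => by simpa [h] using hl.head?_eq
  have hhead : l.head hne = a := by simpa [List.head?_eq_some_head hne] using hl.head?_eq
  have hlast : l.getLast hne = b := by
    simpa [List.getLast?_eq_some_getLast hne] using hl.getLast?_eq
  let w := (Walk.ofSupport l hne hl.isChain).copy hhead hlast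
  have hw : w.support = l := by simp [w]
  have hws : ∀ x ∈ w.support, x ∈ s := fun x hx => (hmem x).1 (hw ▸ hx)
  refine ⟨w.induce s hws, ?_⟩
  have hpath : (w.induce s hws).IsPath := by
    rw [Walk.isPath_def, Walk.support_induce]
    exact .of_map Subtype.val (by simpa [hw] using hnodup)
  rw [hpath.isHamiltonian_iff]
  rintro ⟨x, hx⟩
  simpa [hw] using (hmem x).2 hx

end SimpleGraph

namespace DoubleTree

open List

theorem dtOrd_cons (d i : ℕ) (l : List ℕ) :
    dtOrd d (i :: l) = i * d ^ l.length + dtOrd d l := by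
  suffices ∀ a, l.foldl (fun a x => a * d + x) a = a * d ^ l.length + dtOrd d l by
    simpa [dtOrd] using this i
  induction l with
  | nil => simp [dtOrd]
  | cons x l ih =>
    intro a
    simp only [dtOrd, foldl_cons, length_cons, zero_mul, zero_add] at ih ⊢
    rw [ih, ih x]
    ring

theorem dtOrd_replicate_zero (d h : ℕ) : dtOrd d (replicate h 0) = 0 := by
  induction h with
  | zero => rfl
  | succ h ih => simp [replicate_succ, dtOrd_cons, ih]

theorem dtOrd_replicate_pred {d : ℕ} (hd : 0 < d) (h : ℕ) :
    dtOrd d (replicate h (d - 1)) + 1 = d ^ h := by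
  induction h with
  | zero => rfl
  | succ h ih =>
    rw [replicate_succ, dtOrd_cons, length_replicate, add_assoc, ih, pow_succ]
    obtain ⟨d, rfl⟩ := Nat.exists_eq_add_one_of_ne_zero hd.ne'
    simp only [Nat.add_sub_cancel]
    ring

/-- One half of `doubleTree d h` (tree edges and the leaf path `E₁`), on all lists. -/
def TreeAdj (d h : ℕ) (x y : List ℕ) : Prop :=
  (∃ a, y = x ++ [a]) ∨ (∃ a, x = y ++ [a]) ∨
  (x.length = h ∧ y.length = h ∧ dtOrd d y = dtOrd d x + 1)

theorem treeAdj_nil_singleton (d h i : ℕ) : TreeAdj d h [] [i] := .inl ⟨i, rfl⟩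

theorem treeAdj_singleton_nil (d h i : ℕ) : TreeAdj d h [i] [] := .inr <| .inl ⟨i, rfl⟩

theorem TreeAdj.cons {d h : ℕ} {x y : List ℕ} (i : ℕ) (hxy : TreeAdj d h x y) :
    TreeAdj d (h + 1) (i :: x) (i :: y) := by
  rcases hxy with ⟨a, rfl⟩ | ⟨a, rfl⟩ | ⟨hx, hy, hxy⟩
  · exact .inl ⟨a, rfl⟩
  · exact .inr <| .inl ⟨a, rfl⟩
  · refine .inr <| .inr ⟨by simp [hx], by simp [hy], ?_⟩
    rw [dtOrd_cons, dtOrd_cons, hx, hy, hxy, add_assoc]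

theorem treeAdj_last_leaf_first_leaf {d : ℕ} (hd : 0 < d) (h i : ℕ) :
    TreeAdj d (h + 1) (i :: replicate h (d - 1)) ((i + 1) :: replicate h 0) := by
  refine .inr <| .inr ⟨by simp, by simp, ?_⟩
  rw [dtOrd_cons, dtOrd_cons, length_replicate, length_replicate, dtOrd_replicate_zero,
    add_assoc, dtOrd_replicate_pred hd]
  ring

/-- Copies of `X` in the subtrees of the children `s, …, s + n - 1` of the root. -/
def blocks (X : List (List ℕ)) (s n : ℕ) : List (List ℕ) :=
  (range' s n).flatMap fun i => X.map (i :: ·)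

variable {X Y : List (List ℕ)}

@[simp]
theorem blocks_zero (X : List (List ℕ)) (s : ℕ) : blocks X s 0 = [] := rfl

theorem blocks_one (X : List (List ℕ)) (s : ℕ) : blocks X s 1 = X.map (s :: ·) := by
  simp [blocks]

theorem blocks_add (X : List (List ℕ)) (s m n : ℕ) :
    blocks X s (m + n) = blocks X s m ++ blocks X (s + m) n := by
  rw [blocks, blocks, blocks, ← range'_append_1, flatMap_append]

theorem perm_blocks (hXY : X ~ Y) (s n : ℕ) : blocks X s n ~ blocks Y s n :=
  .flatMap_left _ fun _ _ => hXY.map _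

theorem nil_notMem_blocks (X : List (List ℕ)) (s n : ℕ) : [] ∉ blocks X s n := by
  simp [blocks]

theorem cons_mem_blocks {s n i : ℕ} {x : List ℕ} :
    i :: x ∈ blocks X s n ↔ s ≤ i ∧ i < s + n ∧ x ∈ X := by
  simp [blocks, and_assoc]

theorem nodup_blocks (hX : X.Nodup) (s n : ℕ) : (blocks X s n).Nodup := by
  refine nodup_flatMap.2 ⟨fun i _ => hX.map fun _ _ => (cons_inj_right i).1, ?_⟩
  refine (nodup_range' ..).imp fun hij => disjoint_left.2 ?_
  simp only [mem_map]
  rintro _ ⟨x, -, rfl⟩ ⟨y, -, hyx⟩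
  exact hij (List.cons.inj hyx).1.symm

def vertices (d : ℕ) : ℕ → List (List ℕ)
  | 0 => [[]]
  | h + 1 => [] :: blocks (vertices d h) 0 d

theorem mem_vertices {d h : ℕ} {x : List ℕ} :
    x ∈ vertices d h ↔ x.length ≤ h ∧ ∀ a ∈ x, a < d := by
  induction h generalizing x with
  | zero =>
    simp only [vertices, mem_singleton, nonpos_iff_eq_zero, length_eq_zero_iff]
    exact ⟨fun hx => ⟨hx, by simp [hx]⟩, And.left⟩
  | succ h ih =>
    cases x with
    | nil => simp [vertices]
    | cons i x => simp [vertices, cons_mem_blocks, ih, and_left_comm]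

theorem nodup_vertices (d h : ℕ) : (vertices d h).Nodup := by
  induction h with
  | zero => simp [vertices]
  | succ h ih => exact nodup_cons.2 ⟨nil_notMem_blocks _ _ _, nodup_blocks ih _ _⟩

variable {d h : ℕ}

theorem isChainFromTo_map_cons {l : List (List ℕ)} {a b : List ℕ} (i : ℕ)
    (hl : IsChainFromTo (TreeAdj d h) l a b) :
    IsChainFromTo (TreeAdj d (h + 1)) (l.map (i :: ·)) (i :: a) (i :: b) :=
  hl.map (i :: ·) fun _ _ _ _ => TreeAdj.cons i

theorem isChainFromTo_append_blocks (hd : 0 < d) {B Y : List (List ℕ)} {a : List ℕ} {i : ℕ}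
    (hB : IsChainFromTo (TreeAdj d h) B (replicate h 0) (replicate h (d - 1)))
    (hY : IsChainFromTo (TreeAdj d (h + 1)) Y a (i :: replicate h (d - 1))) (n : ℕ) :
    IsChainFromTo (TreeAdj d (h + 1)) (Y ++ blocks B (i + 1) n) a
      ((i + n) :: replicate h (d - 1)) := by
  induction n with
  | zero => simpa using hY
  | succ n ih =>
    rw [blocks_add, ← append_assoc, blocks_one, show i + 1 + n = i + n + 1 by omega]
    exact ih.append (treeAdj_last_leaf_first_leaf hd h (i + n)) (isChainFromTo_map_cons _ hB)

structure IsHamiltonianPath (d h : ℕ) (l : List (List ℕ)) (a b : List ℕ) : Prop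
    extends IsChainFromTo (TreeAdj d h) l a b where
  perm : l ~ vertices d h

/-- Hamiltonian paths of one half: from the root `[]` to the rightmost leaf
`replicate h (d - 1)`, from the leftmost leaf `replicate h 0` to the rightmost one, and from the
leftmost leaf to the root. -/
def halfPaths (d : ℕ) : ℕ → List (List ℕ) × List (List ℕ) × List (List ℕ)
  | 0 => ([[]], [[]], [[]])
  | h + 1 =>
    let A := (halfPaths d h).1
    let B := (halfPaths d h).2.1
    let C := (halfPaths d h).2.2
    ([] :: (A.map (0 :: ·) ++ blocks B 1 (d - 1)),
      C.map (0 :: ·) ++ [] :: (A.map (1 :: ·) ++ blocks B 2 (d - 2)),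
      blocks B 0 (d - 1) ++ C.map ((d - 1) :: ·) ++ [[]])

theorem vertices_succ_eq {m : ℕ} (hm : m ≤ d) (h : ℕ) :
    vertices d (h + 1) = [] :: (blocks (vertices d h) 0 m ++ blocks (vertices d h) m (d - m)) := by
  have := blocks_add (vertices d h) 0 m (d - m)
  rw [Nat.add_sub_cancel' hm, zero_add] at this
  rw [vertices, this]

variable {A B C : List (List ℕ)}

theorem isHamiltonianPath_succ_root_rightmost (hd : 0 < d)
    (hA : IsHamiltonianPath d h A [] (replicate h (d - 1)))
    (hB : IsHamiltonianPath d h B (replicate h 0) (replicate h (d - 1))) :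
    IsHamiltonianPath d (h + 1) ([] :: (A.map (0 :: ·) ++ blocks B 1 (d - 1)))
      [] (replicate (h + 1) (d - 1)) where
  toIsChainFromTo := by
    have := (isChainFromTo_append_blocks (by omega) hB.1
      (isChainFromTo_map_cons 0 hA.1) (d - 1)).cons (treeAdj_nil_singleton d (h + 1) 0)
    rwa [zero_add, zero_add] at this
  perm := by
    rw [vertices_succ_eq (by omega : 1 ≤ d), blocks_one]
    exact .cons _ <| (hA.perm.map _).append (perm_blocks hB.perm _ _)

theorem isHamiltonianPath_succ_leftmost_rightmost (hd : 2 ≤ d)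
    (hA : IsHamiltonianPath d h A [] (replicate h (d - 1)))
    (hB : IsHamiltonianPath d h B (replicate h 0) (replicate h (d - 1)))
    (hC : IsHamiltonianPath d h C (replicate h 0) []) :
    IsHamiltonianPath d (h + 1)
      (C.map (0 :: ·) ++ [] :: (A.map (1 :: ·) ++ blocks B 2 (d - 2)))
      (replicate (h + 1) 0) (replicate (h + 1) (d - 1)) where
  toIsChainFromTo := by
    have := (isChainFromTo_map_cons 0 hC.1).append (treeAdj_singleton_nil d (h + 1) 0)
      ((isChainFromTo_append_blocks (by omega) hB.1
        (isChainFromTo_map_cons 1 hA.1) (d - 2)).cons (treeAdj_nil_singleton d (h + 1) 1))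
    rwa [show 1 + (d - 2) = d - 1 by omega] at this
  perm := by
    rw [vertices_succ_eq (by omega : 2 ≤ d), blocks_add _ _ 1 1, blocks_one, blocks_one, zero_add,
      append_assoc]
    exact perm_middle.trans <| .cons _ <|
      (hC.perm.map _).append <| (hA.perm.map _).append (perm_blocks hB.perm _ _)

theorem isHamiltonianPath_succ_leftmost_root (hd : 2 ≤ d)
    (hB : IsHamiltonianPath d h B (replicate h 0) (replicate h (d - 1)))
    (hC : IsHamiltonianPath d h C (replicate h 0) []) :
    IsHamiltonianPath d (h + 1) (blocks B 0 (d - 1) ++ C.map ((d - 1) :: ·) ++ [[]])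
      (replicate (h + 1) 0) [] where
  toIsChainFromTo := by
    have hblocks := isChainFromTo_append_blocks (by omega) hB.1
      (isChainFromTo_map_cons 0 hB.1) (d - 2)
    rw [← blocks_one, zero_add, ← blocks_add, show 1 + (d - 2) = d - 1 by omega] at hblocks
    have := hblocks.append (treeAdj_last_leaf_first_leaf (by omega) h _)
      (isChainFromTo_map_cons (0 + (d - 2) + 1) hC.1)
    rw [show 0 + (d - 2) + 1 = d - 1 by omega] at this
    exact this.append (treeAdj_singleton_nil d (h + 1) (d - 1)) (.singleton [])
  perm := by
    rw [vertices_succ_eq (by omega : d - 1 ≤ d), Nat.sub_sub_self (by omega), blocks_one]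
    exact (perm_append_singleton _ _).trans <| .cons _ <|
      (perm_blocks hB.perm _ _).append (hC.perm.map _)

theorem isHamiltonianPath_halfPaths (hd : 2 ≤ d) : ∀ h,
    IsHamiltonianPath d h (halfPaths d h).1 [] (replicate h (d - 1)) ∧
    IsHamiltonianPath d h (halfPaths d h).2.1 (replicate h 0) (replicate h (d - 1)) ∧
    IsHamiltonianPath d h (halfPaths d h).2.2 (replicate h 0) []
  | 0 => by
    have : IsHamiltonianPath d 0 [[]] [] [] := ⟨.singleton [], .refl _⟩
    exact ⟨this, this, this⟩
  | h + 1 => by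
    obtain ⟨hA, hB, hC⟩ := isHamiltonianPath_halfPaths hd h
    exact ⟨isHamiltonianPath_succ_root_rightmost (by omega) hA hB,
      isHamiltonianPath_succ_leftmost_rightmost hd hA hB hC,
      isHamiltonianPath_succ_leftmost_root hd hB hC⟩

theorem dtValid_iff_mem_vertices {p : Bool × List ℕ} : dtValid d h p ↔ p.2 ∈ vertices d h :=
  mem_vertices.symm

theorem TreeAdj.ne {x y : List ℕ} (hxy : TreeAdj d h x y) : x ≠ y := by
  rintro rfl
  rcases hxy with ⟨a, hx⟩ | ⟨a, hx⟩ | ⟨-, -, hx⟩ <;> simp_all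

theorem doubleTree_adj_of_treeAdj (b : Bool) {x y : List ℕ} (hx : x ∈ vertices d h)
    (hy : y ∈ vertices d h) (hxy : TreeAdj d h x y) : (doubleTree d h).Adj (b, x) (b, y) := by
  rw [← dtValid_iff_mem_vertices (p := (b, x))] at hx
  rw [← dtValid_iff_mem_vertices (p := (b, y))] at hy
  refine (SimpleGraph.fromRel_adj _ _ _).2 ⟨by simpa using hxy.ne, ?_⟩
  rcases hxy with ⟨a, rfl⟩ | ⟨a, rfl⟩ | ⟨hxh, hyh, hxy⟩
  · exact .inl ⟨hx, hy, .inl ⟨rfl, a, rfl⟩⟩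
  · exact .inr ⟨hy, hx, .inl ⟨rfl, a, rfl⟩⟩
  · exact .inl ⟨hx, hy, .inr <| .inl ⟨rfl, hxh, hyh, hxy⟩⟩

/-- The edge `u^l_d v^l_d` of `E₂`, the only cross edge the path uses. -/
theorem doubleTree_adj_last_leaves (hd : 0 < d) :
    (doubleTree d h).Adj (true, replicate h (d - 1)) (false, replicate h (d - 1)) := by
  have hv (b : Bool) : dtValid d h (b, replicate h (d - 1)) :=
    ⟨by simp, fun a ha => by rw [eq_of_mem_replicate ha]; omega⟩
  refine (SimpleGraph.fromRel_adj _ _ _).2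
    ⟨by simp, .inl ⟨hv true, hv false, .inr <| .inr ?_⟩⟩
  exact ⟨rfl, rfl, by simp [dtLeaf], by simp [dtLeaf], .inl ⟨rfl, le_rfl⟩⟩

def upperThenLower (A : List (List ℕ)) : List (Bool × List ℕ) :=
  A.map (true, ·) ++ (A.map (false, ·)).reverse

theorem IsHamiltonianPath.isChainFromTo_upperThenLower (hd : 0 < d)
    (hA : IsHamiltonianPath d h A [] (replicate h (d - 1))) :
    IsChainFromTo (doubleTree d h).Adj (upperThenLower A) (true, []) (false, []) := by
  have hadj (b : Bool) : ∀ x ∈ A, ∀ y ∈ A, TreeAdj d h x y →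
      (doubleTree d h).Adj (b, x) (b, y) := fun x hx y hy =>
    doubleTree_adj_of_treeAdj b (hA.perm.subset hx) (hA.perm.subset hy)
  exact (hA.map _ (hadj true)).append (doubleTree_adj_last_leaves hd)
    ((hA.map _ (hadj false)).reverse (doubleTree d h).symm)

theorem nodup_upperThenLower (hA : A.Nodup) : (upperThenLower A).Nodup := by
  refine (hA.map fun _ _ => congrArg Prod.snd).append
    (nodup_reverse.2 <| hA.map fun _ _ => congrArg Prod.snd) ?_
  simp [disjoint_left]

theorem mem_upperThenLower_iff (hA : A ~ vertices d h) (p : Bool × List ℕ) :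
    p ∈ upperThenLower A ↔ dtValid d h p := by
  obtain ⟨_ | _, x⟩ := p <;> simp [upperThenLower, dtValid_iff_mem_vertices, hA.mem_iff]

end DoubleTree

/-- The double-tree of degree `d ≥ 2` and height `h` has a
Hamiltonian path from one root to the other. -/
theorem doubleTree_hamiltonianPath (d h : ℕ) (hd : 2 ≤ d) :
    ∃ p : ((doubleTree d h).induce {p | dtValid d h p}).Walk
        ⟨(true, []), by constructor <;> simp⟩ ⟨(false, []), by constructor <;> simp⟩,
      p.IsHamiltonian := by
  obtain ⟨hA, -, -⟩ := DoubleTree.isHamiltonianPath_halfPaths hd h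
  exact SimpleGraph.exists_isHamiltonian_induce_of_isChainFromTo _ _
    (hA.isChainFromTo_upperThenLower (by omega))
    (DoubleTree.nodup_upperThenLower (hA.perm.nodup_iff.2 (DoubleTree.nodup_vertices d h)))
    (DoubleTree.mem_upperThenLower_iff hA.perm)
end
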